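/- arXiv:1911.05914 — 12 statements merged into one kernel-verified Lean document; each statement's English description precedes it below -/
import Mathlib

section
/- Every connected Feynman graph all of whose vertices are bivalent (|t⁻¹(v)| = 2 for every vertex v) is isomorphic either to a line graph L^k for some k ≥ 0 or to a wheel graph W^m for some m ≥ 1. -/
/-- A Feynman graph: finite sets of edges `E`, half-edges `H`, vertices `V`,
with an injective attachment `s : H → E`, a target map `t : H → V`, and a
fixed-point-free involution `inv : E → E`. -/
structure FG where
  E : Type
  H : Type
  V : Type
  finE : Finite E
  finH : Finite H
  finV : Finite V
  s : H → E
  t : H → V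
  inv : E → E
  s_inj : Function.Injective s
  inv_inv : ∀ e, inv (inv e) = e
  inv_ne : ∀ e, inv e ≠ e

attribute [instance] FG.finE FG.finH FG.finV

/-- A morphism of Feynman graphs. -/
structure FGHom (G G' : FG) where
  fE : G.E → G'.E
  fH : G.H → G'.H
  fV : G.V → G'.V
  comm_inv : ∀ e, fE (G.inv e) = G'.inv (fE e)
  comm_s : ∀ h, fE (G.s h) = G'.s (fH h)
  comm_t : ∀ h, fV (G.t h) = G'.t (fH h)

/-- Composition of morphisms of Feynman graphs. -/
def FGHom.comp {G₁ G₂ G₃ : FG} (g : FGHom G₂ G₃) (f : FGHom G₁ G₂) : FGHom G₁ G₃ where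
  fE := g.fE ∘ f.fE
  fH := g.fH ∘ f.fH
  fV := g.fV ∘ f.fV
  comm_inv := fun e => by simp only [Function.comp_apply, f.comm_inv, g.comm_inv]
  comm_s := fun h => by simp only [Function.comp_apply, f.comm_s, g.comm_s]
  comm_t := fun h => by simp only [Function.comp_apply, f.comm_t, g.comm_t]

/-- A morphism is an isomorphism if all three components are bijections. -/
def FGHom.IsIso {G G' : FG} (f : FGHom G G') : Prop :=
  Function.Bijective f.fE ∧ Function.Bijective f.fH ∧ Function.Bijective f.fV

/-- A morphism is locally injective if it is injective on each fibre `t⁻¹(v)`. -/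
def FGHom.LocInj {G G' : FG} (f : FGHom G G') : Prop :=
  ∀ h₁ h₂ : G.H, G.t h₁ = G.t h₂ → f.fH h₁ = f.fH h₂ → h₁ = h₂

/-- A morphism is étale if it induces a bijection `t⁻¹(v) → t'⁻¹(f_V v)`
for every vertex `v`. -/
def FGHom.Etale {G G' : FG} (f : FGHom G G') : Prop :=
  f.LocInj ∧
  ∀ (v : G.V) (h' : G'.H), G'.t h' = f.fV v → ∃ h : G.H, G.t h = v ∧ f.fH h = h'

/-- A port is an edge not in the image of `s`. -/
def FG.IsPort (G : FG) (e : G.E) : Prop := e ∉ Set.range G.s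

/-- An inner edge: both `e` and `inv e` are in the image of `s`. -/
def FG.IsInner (G : FG) (e : G.E) : Prop :=
  e ∈ Set.range G.s ∧ G.inv e ∈ Set.range G.s

/-- Connectedness: `E ⊔ V` is nonempty and every compatible `Bool`-colouring
of edges and vertices is constant. -/
def FG.Connected (G : FG) : Prop :=
  Nonempty (G.E ⊕ G.V) ∧
  ∀ (cE : G.E → Bool) (cV : G.V → Bool),
    (∀ e, cE (G.inv e) = cE e) →
    (∀ h, cV (G.t h) = cE (G.s h)) →
    ∀ x y : G.E ⊕ G.V, Sum.elim cE cV x = Sum.elim cE cV y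

/-- The line graph `L^k` (for `k ≥ 0`): edges `l_0, …, l_{2k+1}` (here the pair
`{l_{2j}, l_{2j+1}}` is encoded as `(j, false)` and `(j, true)`), `k` vertices,
and `2k` half-edges attaching `l_{2i-1}` and `l_{2i}` to the vertex `v_i`. -/
def lineGraph (k : ℕ) : FG where
  E := Fin (k+1) × Bool
  H := Fin k × Bool
  V := Fin k
  finE := inferInstance
  finH := inferInstance
  finV := inferInstance
  s := fun p => if p.2 then (p.1.castSucc, true) else (p.1.succ, false)
  t := fun p => p.1
  inv := fun p => (p.1, !p.2)
  s_inj := by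
    rintro ⟨i, bi⟩ ⟨j, bj⟩ hij
    cases bi <;> cases bj <;> simp_all [Fin.succ_inj, Fin.castSucc_inj]
  inv_inv := by rintro ⟨i, b⟩; simp
  inv_ne := by
    rintro ⟨i, b⟩ h
    rw [Prod.mk.injEq] at h
    exact (Bool.not_ne_self b) h.2

/-- The wheel graph `W^{m+1}` (this definition, with parameter `m : ℕ`, yields
exactly the wheel graphs `W^m` for `m ≥ 1`): `m+1` vertices in `Fin (m+1)`,
the vertex `i` carrying the two edges `(i, false)` and `(i, true)` (which are
also the half-edges, via `s = id`), and the involution pairing `(i, true)`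
with `(i+1, false)` cyclically. -/
def wheelGraph (m : ℕ) : FG where
  E := Fin (m+1) × Bool
  H := Fin (m+1) × Bool
  V := Fin (m+1)
  finE := inferInstance
  finH := inferInstance
  finV := inferInstance
  s := id
  t := fun p => p.1
  inv := fun p => if p.2 then (p.1 + 1, false) else (p.1 - 1, true)
  s_inj := fun _ _ h => h
  inv_inv := by
    rintro ⟨i, b⟩
    cases b <;> simp
  inv_ne := by
    rintro ⟨i, b⟩ h
    cases b <;> simp_all

/-!
In a bivalent graph the two half-edges at each vertex give, besides the fixed-point-free
involution `τ = inv` of the edges, a second involution `σ` of the edges exchanging the two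
edges attached at a common vertex and fixing the ports. A bivalent graph is determined up to
isomorphism by `(E, τ, σ)`, and connectedness says that the dihedral group `⟨σ, τ⟩` acts
transitively on `E`. Since `τ π τ = π⁻¹` for `π = σ τ`, every edge is `πⁿ e` or `τ πⁿ e`.

If there is a port `p`, then `σ p = p` gives `τ πⁿ p = π^(-n-1) p`, so `E` is the single
`π`-orbit of `p`; its length is even because `τ` has no fixed point, say `2 (k + 1)`, and the
edges `πʲ p`, `τ πʲ p` for `j ≤ k` are laid out as in `L^k`. Otherwise `σ` and `τ` are both
fixed-point-free, which forces the `π`-orbit of an edge and its image under `τ` to be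
disjoint (`πⁿ e = τ e` would give a fixed point of `σ` or `τ` halfway), and the two halves
are laid out as in `W^m`.
-/

open Function Set MulAction

theorem exists_fin_dvd_sub (m : ℕ) (n : ℤ) : ∃ i : Fin (m + 1), ((m + 1 : ℕ) : ℤ) ∣ i - n := by
  have h0 : 0 ≤ n % (m + 1 : ℕ) := Int.emod_nonneg _ (by omega)
  have hlt : n % (m + 1 : ℕ) < (m + 1 : ℕ) := Int.emod_lt_of_pos _ (by omega)
  refine ⟨⟨(n % (m + 1 : ℕ)).toNat, by omega⟩, ?_⟩
  rw [Fin.val_mk, Int.toNat_of_nonneg h0]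
  exact (Int.mod_modEq n _).symm.dvd

theorem Fin.eq_of_dvd_sub {m : ℕ} {i j : Fin (m + 1)} (h : ((m + 1 : ℕ) : ℤ) ∣ i - j) : i = j := by
  have := Int.eq_zero_of_abs_lt_dvd h (by rw [abs_lt]; omega)
  exact Fin.ext (by omega)

theorem dvd_val_add_one_sub {m : ℕ} (i : Fin (m + 1)) :
    ((m + 1 : ℕ) : ℤ) ∣ ((i + 1 : Fin (m + 1)) : ℤ) - (i + 1) := by
  rw [Fin.val_add_one]
  split_ifs with h
  · exact ⟨-1, by simp [h]⟩
  · simp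

section Dihedral

variable {Γ α : Type*} [Group Γ] [MulAction Γ α]

theorem zpow_smul_eq_zpow_smul_iff {g : Γ} {x : α} {a b : ℤ} :
    g ^ a • x = g ^ b • x ↔ (period g x : ℤ) ∣ a - b := by
  rw [← zpow_smul_eq_iff_period_dvd, ← inv_smul_eq_iff, smul_smul, ← zpow_neg, ← zpow_add,
    neg_add_eq_sub]

theorem mul_zpow_eq_zpow_neg_mul {σ τ : Γ} (hσ : σ * σ = 1) (hτ : τ * τ = 1) (n : ℤ) :
    τ * (σ * τ) ^ n = (σ * τ) ^ (-n) * τ := by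
  have hconj : τ * (σ * τ) * τ⁻¹ = (σ * τ)⁻¹ := by
    rw [mul_inv_rev, inv_eq_of_mul_eq_one_right hσ, inv_eq_of_mul_eq_one_right hτ,
      mul_assoc, mul_assoc, hτ, mul_one]
  rw [zpow_neg, ← inv_zpow, ← hconj, conj_zpow, inv_mul_cancel_right]

theorem mul_zpow_eq_mul_zpow_sub_one {σ τ : Γ} (hσ : σ * σ = 1) (n : ℤ) :
    σ * (σ * τ) ^ n = τ * (σ * τ) ^ (n - 1) := by
  rw [← one_mul (τ * _), ← hσ, mul_assoc, ← mul_assoc σ τ, ← zpow_one_add, add_sub_cancel]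

theorem zpow_smul_ne_smul {σ τ : Γ} (hσ : σ * σ = 1) (hτ : τ * τ = 1)
    (hσx : ∀ x : α, σ • x ≠ x) (hτx : ∀ x : α, τ • x ≠ x) (n : ℤ) (x : α) :
    (σ * τ) ^ n • x ≠ τ • x := by
  intro h
  obtain ⟨d, rfl | rfl⟩ := Int.even_or_odd' n
  · apply hτx ((σ * τ) ^ d • x)
    rw [smul_smul, mul_zpow_eq_zpow_neg_mul hσ hτ, mul_smul, ← h, smul_smul, ← zpow_add]
    congr 2
    ring
  · apply hσx ((σ * τ) ^ (d + 1) • x)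
    rw [smul_smul, mul_zpow_eq_mul_zpow_sub_one hσ, mul_smul, add_sub_cancel_right, ← mul_smul,
      mul_zpow_eq_zpow_neg_mul hσ hτ, mul_smul, ← h, smul_smul, ← zpow_add]
    congr 2
    ring

theorem smul_zpow_smul_eq_zpow_neg_sub_one {σ τ : Γ} (hσ : σ * σ = 1) (hτ : τ * τ = 1) {p : α}
    (hp : σ • p = p) (n : ℤ) : τ • (σ * τ) ^ n • p = (σ * τ) ^ (-n - 1) • p := by
  have hτp : τ • p = (σ * τ) ^ (-1 : ℤ) • p := by
    rw [zpow_neg_one, mul_inv_rev, mul_smul, inv_eq_of_mul_eq_one_right hσ, hp,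
      inv_eq_of_mul_eq_one_right hτ]
  rw [smul_smul, mul_zpow_eq_zpow_neg_mul hσ hτ, mul_smul, hτp, smul_smul, ← zpow_add,
    ← sub_eq_add_neg]

theorem smul_zpow_smul_eq_zpow_neg {σ τ : Γ} (hσ : σ * σ = 1) (hτ : τ * τ = 1) {p : α}
    (hp : σ • p = p) (n : ℤ) : σ • (σ * τ) ^ n • p = (σ * τ) ^ (-n) • p := by
  rw [smul_smul, mul_zpow_eq_mul_zpow_sub_one hσ, mul_smul,
    smul_zpow_smul_eq_zpow_neg_sub_one hσ hτ hp, neg_sub, sub_sub_cancel_left]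

theorem even_period_of_smul_eq {σ τ : Γ} (hσ : σ * σ = 1) (hτ : τ * τ = 1)
    (hτx : ∀ x : α, τ • x ≠ x) {p : α} (hp : σ • p = p) : Even (period (σ * τ) p) := by
  by_contra hodd
  obtain ⟨d, hd⟩ := Nat.not_even_iff_odd.1 hodd
  apply hτx ((σ * τ) ^ (d : ℤ) • p)
  rw [smul_zpow_smul_eq_zpow_neg_sub_one hσ hτ hp, zpow_smul_eq_zpow_smul_iff, hd]
  exact ⟨-1, by push_cast; ring⟩

def wheelLayout (σ τ : Γ) (x : α) (m : ℕ) (q : Fin (m + 1) × Bool) : α :=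
  bif q.2 then (σ * τ) ^ (q.1 : ℤ) • x else τ • (σ * τ) ^ ((q.1 : ℤ) - 1) • x

theorem wheelLayout_injective {σ τ : Γ} (hσ : σ * σ = 1) (hτ : τ * τ = 1)
    (hσx : ∀ x : α, σ • x ≠ x) (hτx : ∀ x : α, τ • x ≠ x) {x : α} {m : ℕ}
    (hm : period (σ * τ) x = m + 1) : Injective (wheelLayout σ τ x m) := by
  have hper {a b : ℤ} (h : (σ * τ) ^ a • x = (σ * τ) ^ b • x) : ((m + 1 : ℕ) : ℤ) ∣ a - b := by
    rwa [zpow_smul_eq_zpow_smul_iff, hm] at h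
  have hcross (i j : ℤ) : (σ * τ) ^ i • x ≠ τ • (σ * τ) ^ j • x := by
    rw [← sub_add_cancel i j, zpow_add, mul_smul]
    exact zpow_smul_ne_smul hσ hτ hσx hτx _ _
  rintro ⟨i, _ | _⟩ ⟨j, _ | _⟩ h <;> simp only [wheelLayout, cond_false, cond_true] at h
  · congr 1
    exact Fin.eq_of_dvd_sub (by simpa using hper (MulAction.injective τ h))
  · exact absurd h.symm (hcross _ _)
  · exact absurd h (hcross _ _)
  · rw [Fin.eq_of_dvd_sub (hper h)]

end Dihedral

namespace FG

variable {G : FG}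

def invPerm (G : FG) : Equiv.Perm G.E := Involutive.toPerm G.inv G.inv_inv

theorem invPerm_mul_self (G : FG) : G.invPerm * G.invPerm = 1 :=
  Equiv.ext G.inv_inv

theorem Connected.eq_univ (hc : G.Connected) {S : Set G.E} (hS : S.Nonempty)
    (hinv : ∀ e ∈ S, G.inv e ∈ S) (ht : ∀ h h', G.t h = G.t h' → G.s h ∈ S → G.s h' ∈ S) :
    S = univ := by
  classical
  obtain ⟨e₀, he₀⟩ := hS
  refine eq_univ_of_forall fun e => ?_
  have hcol := hc.2 (fun e => decide (e ∈ S)) (fun v => decide (∃ h, G.t h = v ∧ G.s h ∈ S))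
    (fun e => decide_eq_decide.2 ⟨fun he => G.inv_inv e ▸ hinv _ he, hinv e⟩)
    (fun h => decide_eq_decide.2 ⟨fun ⟨h', hh', hS'⟩ => ht h' h hh' hS', fun hS' => ⟨h, rfl, hS'⟩⟩)
    (.inl e) (.inl e₀)
  simpa [he₀] using hcol

def Bivalent (G : FG) : Prop := ∀ v : G.V, Nat.card {h : G.H // G.t h = v} = 2

namespace Bivalent

theorem exists_t_eq (hG : G.Bivalent) (v : G.V) : ∃ h, G.t h = v := by
  have : 0 < Nat.card {h : G.H // G.t h = v} := by rw [hG v]; norm_num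
  obtain ⟨⟨h, hv⟩⟩ := (Nat.card_pos_iff.1 this).1
  exact ⟨h, hv⟩

theorem existsUnique_partner (hG : G.Bivalent) (h : G.H) : ∃! h', G.t h' = G.t h ∧ h' ≠ h := by
  obtain ⟨⟨h', ht⟩, hne, huniq⟩ := (Nat.card_eq_two_iff' ⟨h, rfl⟩).1 (hG (G.t h))
  refine ⟨h', ⟨ht, fun he => hne (Subtype.ext he)⟩, fun h'' ⟨ht'', hne''⟩ => ?_⟩
  exact congrArg Subtype.val (huniq ⟨h'', ht''⟩ fun he => hne'' (congrArg Subtype.val he))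

noncomputable def partner (hG : G.Bivalent) (h : G.H) : G.H :=
  (hG.existsUnique_partner h).exists.choose

theorem t_partner (hG : G.Bivalent) (h : G.H) : G.t (hG.partner h) = G.t h :=
  (hG.existsUnique_partner h).exists.choose_spec.1

theorem partner_ne (hG : G.Bivalent) (h : G.H) : hG.partner h ≠ h :=
  (hG.existsUnique_partner h).exists.choose_spec.2

theorem eq_or_eq_partner (hG : G.Bivalent) {h h' : G.H} (ht : G.t h' = G.t h) :
    h' = h ∨ h' = hG.partner h :=
  or_iff_not_imp_left.2 fun hne =>
    (hG.existsUnique_partner h).unique ⟨ht, hne⟩ ⟨hG.t_partner h, hG.partner_ne h⟩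

theorem partner_involutive (hG : G.Bivalent) : Involutive hG.partner := fun h =>
  (hG.eq_or_eq_partner ((hG.t_partner _).trans (hG.t_partner h))).resolve_right
    (hG.partner_ne _)

noncomputable def vertexSwap (hG : G.Bivalent) : Equiv.Perm G.E :=
  by classical exact hG.partner_involutive.toPerm.extendDomain (Equiv.ofInjective G.s G.s_inj)

theorem vertexSwap_s (hG : G.Bivalent) (h : G.H) : hG.vertexSwap (G.s h) = G.s (hG.partner h) :=
  by classical exact Equiv.Perm.extendDomain_apply_image _ (Equiv.ofInjective G.s G.s_inj) h

theorem vertexSwap_eq_self_iff (hG : G.Bivalent) {e : G.E} :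
    hG.vertexSwap e = e ↔ e ∉ range G.s := by
  classical
  refine ⟨?_, Equiv.Perm.extendDomain_apply_not_subtype _ _⟩
  rintro he ⟨h, rfl⟩
  rw [vertexSwap_s] at he
  exact hG.partner_ne h (G.s_inj he)

theorem vertexSwap_mul_self (hG : G.Bivalent) : hG.vertexSwap * hG.vertexSwap = 1 := by
  ext e
  by_cases he : e ∈ range G.s
  · obtain ⟨h, rfl⟩ := he
    rw [Equiv.Perm.mul_apply, vertexSwap_s, vertexSwap_s, hG.partner_involutive,
      Equiv.Perm.one_apply]
  · rw [Equiv.Perm.mul_apply, hG.vertexSwap_eq_self_iff.2 he, hG.vertexSwap_eq_self_iff.2 he,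
      Equiv.Perm.one_apply]

theorem exists_zpow_smul_eq (hG : G.Bivalent) (hc : G.Connected) (e₀ e : G.E) :
    ∃ n : ℤ, (hG.vertexSwap * G.invPerm) ^ n • e₀ = e ∨
      (hG.vertexSwap * G.invPerm) ^ n • e₀ = G.invPerm • e := by
  set σ := hG.vertexSwap
  set τ := G.invPerm
  have hτ : τ⁻¹ = τ := inv_eq_of_mul_eq_one_right G.invPerm_mul_self
  have hσ : σ⁻¹ = σ := inv_eq_of_mul_eq_one_right hG.vertexSwap_mul_self
  let S : Set G.E := {e | ∃ n : ℤ, (σ * τ) ^ n • e₀ = e ∨ (σ * τ) ^ n • e₀ = τ • e}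
  have hswap : ∀ e ∈ S, σ • e ∈ S := by
    rintro e ⟨n, he | he⟩
    · refine ⟨-1 + n, .inr ?_⟩
      rw [zpow_add, zpow_neg_one, mul_smul, he, mul_inv_rev, hσ, hτ, mul_smul]
    · refine ⟨1 + n, .inl ?_⟩
      rw [zpow_one_add, mul_smul, he, ← mul_smul, mul_assoc, G.invPerm_mul_self, mul_one]
  have hS : S = univ := by
    refine hc.eq_univ ⟨e₀, 0, .inl (one_smul _ e₀)⟩ ?_ fun h h' hhh' hh => ?_
    · rintro e ⟨n, he | he⟩
      exacts [⟨n, .inr (he.trans (G.inv_inv e).symm)⟩, ⟨n, .inl he⟩]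
    · rcases hG.eq_or_eq_partner hhh'.symm with rfl | rfl
      exacts [hh, hG.vertexSwap_s h ▸ hswap _ hh]
  exact eq_univ_iff_forall.1 hS e

theorem exists_isIso_of_bijective {A B : FG} (hA : A.Bivalent) (hB : B.Bivalent)
    {φ : A.E → B.E} (hφ : Bijective φ) (hinv : ∀ e, φ (A.inv e) = B.inv (φ e))
    (hport : ∀ e, e ∉ range A.s → φ e ∉ range B.s)
    (hswap : ∀ h h', A.t h = A.t h' → h ≠ h' → hB.vertexSwap (φ (A.s h)) = φ (A.s h')) :
    ∃ f : FGHom A B, f.IsIso := by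
  have hswap' (h : A.H) : hB.vertexSwap (φ (A.s h)) = φ (A.s (hA.partner h)) :=
    hswap h _ (hA.t_partner h).symm (hA.partner_ne h).symm
  have hatt (h : A.H) : φ (A.s h) ∈ range B.s := by
    by_contra hn
    rw [← hB.vertexSwap_eq_self_iff, hswap'] at hn
    exact hA.partner_ne h (A.s_inj (hφ.1 hn))
  choose fH hfH using hatt
  have hfH_partner (h : A.H) : fH (hA.partner h) = hB.partner (fH h) :=
    B.s_inj (by rw [hfH, ← hswap', ← hfH, hB.vertexSwap_s])
  have hfH_t {h h' : A.H} (hhh' : A.t h = A.t h') : B.t (fH h) = B.t (fH h') := by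
    rcases hA.eq_or_eq_partner hhh' with rfl | rfl
    exacts [rfl, by rw [hfH_partner, hB.t_partner]]
  have hfH_inj : Injective fH := fun h h' he => A.s_inj (hφ.1 (by rw [← hfH, ← hfH, he]))
  have hfH_surj : Surjective fH := by
    intro b
    obtain ⟨e, he⟩ := hφ.2 (B.s b)
    obtain ⟨h, rfl⟩ : e ∈ range A.s := not_not.1 fun hn => hport e hn ⟨b, he.symm⟩
    exact ⟨h, B.s_inj ((hfH h).trans he)⟩
  choose half hhalf using hA.exists_t_eq
  refine ⟨⟨φ, fH, fun v => B.t (fH (half v)), hinv, fun h => (hfH h).symm,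
    fun h => hfH_t (hhalf _)⟩, hφ, ⟨hfH_inj, hfH_surj⟩, fun v v' hvv' => ?_, fun w => ?_⟩
  · rw [← hhalf v, ← hhalf v']
    rcases hB.eq_or_eq_partner hvv'.symm with he | he
    · rw [hfH_inj he]
    · rw [← hfH_partner] at he
      rw [hfH_inj he, hA.t_partner]
  · obtain ⟨b, rfl⟩ := hB.exists_t_eq w
    obtain ⟨h, rfl⟩ := hfH_surj b
    exact ⟨A.t h, hfH_t (hhalf _)⟩

end Bivalent

end FG

theorem FGHom.IsIso.exists_symm {A B : FG} {f : FGHom A B} (hf : f.IsIso) :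
    ∃ g : FGHom B A, g.IsIso := by
  obtain ⟨hE, hH, hV⟩ := hf
  let eE := Equiv.ofBijective _ hE
  let eH := Equiv.ofBijective _ hH
  let eV := Equiv.ofBijective _ hV
  refine ⟨⟨eE.symm, eH.symm, eV.symm, fun e => ?_, fun h => ?_, fun h => ?_⟩,
    eE.symm.bijective, eH.symm.bijective, eV.symm.bijective⟩
  · rw [Equiv.symm_apply_eq]
    exact (congrArg B.inv (eE.apply_symm_apply e)).symm.trans (f.comm_inv _).symm
  · rw [Equiv.symm_apply_eq]
    exact ((f.comm_s _).trans (congrArg B.s (eH.apply_symm_apply h))).symm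
  · rw [Equiv.symm_apply_eq]
    exact ((f.comm_t _).trans (congrArg B.t (eH.apply_symm_apply h))).symm

theorem card_subtype_fst_eq_two {ι : Type*} (i : ι) : Nat.card {q : ι × Bool // q.1 = i} = 2 := by
  rw [Nat.card_congr (β := Bool) ⟨fun q => q.1.2, fun b => ⟨(i, b), rfl⟩,
    fun ⟨⟨_, _⟩, h⟩ => by subst h; rfl, fun _ => rfl⟩, Nat.card_eq_fintype_card, Fintype.card_bool]

theorem lineGraph_bivalent (k : ℕ) : (lineGraph k).Bivalent := card_subtype_fst_eq_two

theorem wheelGraph_bivalent (m : ℕ) : (wheelGraph m).Bivalent := card_subtype_fst_eq_two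

-- `(j, false) = l_{2j}` will be `πʲ p` and `(j, true) = l_{2j+1} = τ πʲ p = π^(-j-1) p`.
def lineExponent {k : ℕ} (q : Fin (k + 1) × Bool) : ℤ :=
  bif q.2 then -((q.1 : ℕ) : ℤ) - 1 else (q.1 : ℕ)

theorem eq_of_dvd_lineExponent_sub {k : ℕ} {q q' : Fin (k + 1) × Bool}
    (h : (2 * (k + 1) : ℤ) ∣ lineExponent q - lineExponent q') : q = q' := by
  obtain ⟨⟨i, hi⟩, b⟩ := q
  obtain ⟨⟨i', hi'⟩, b'⟩ := q'
  have := Int.eq_zero_of_abs_lt_dvd h (by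
    rw [abs_lt]; cases b <;> cases b' <;> simp only [lineExponent, cond] <;> omega)
  cases b <;> cases b' <;> simp [lineExponent, Prod.ext_iff] at this ⊢ <;> omega

theorem exists_lineExponent_dvd_sub (k : ℕ) (n : ℤ) :
    ∃ q : Fin (k + 1) × Bool, (2 * (k + 1) : ℤ) ∣ lineExponent q - n := by
  obtain ⟨r, hr⟩ := exists_fin_dvd_sub (2 * k + 1) n
  rw [show ((2 * k + 1 + 1 : ℕ) : ℤ) = 2 * (k + 1) by push_cast; ring] at hr
  by_cases hrk : (r : ℕ) ≤ k
  · exact ⟨(⟨r, by omega⟩, false), by simpa [lineExponent] using hr⟩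
  · let j : Fin (k + 1) := ⟨2 * k + 1 - r, by omega⟩
    have hj : lineExponent (j, true) = r - 2 * (k + 1) := by
      simp only [lineExponent, cond, j]
      omega
    refine ⟨(j, true), ?_⟩
    rw [hj, sub_right_comm]
    exact dvd_sub hr dvd_rfl

theorem lineGraph_eq_of_notMem_range {k : ℕ} {e : (lineGraph k).E}
    (he : e ∉ range (lineGraph k).s) : e = (0, false) ∨ e = (Fin.last k, true) := by
  obtain ⟨j, _ | _⟩ := e
  · rcases Fin.eq_zero_or_eq_succ j with rfl | ⟨i, rfl⟩
    · exact .inl rfl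
    · exact absurd ⟨(i, false), rfl⟩ he
  · rcases Fin.eq_castSucc_or_eq_last j with ⟨i, rfl⟩ | rfl
    · exact absurd ⟨(i, true), rfl⟩ he
    · exact .inr rfl

namespace FG.Bivalent

variable {G : FG}

theorem exists_zpow_smul_eq_of_notMem_range (hG : G.Bivalent) (hc : G.Connected) {p : G.E}
    (hp : p ∉ range G.s) (e : G.E) : ∃ n : ℤ, (hG.vertexSwap * G.invPerm) ^ n • p = e := by
  obtain ⟨n, hn | hn⟩ := hG.exists_zpow_smul_eq hc p e
  · exact ⟨n, hn⟩
  · refine ⟨-n - 1, ?_⟩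
    rw [← smul_zpow_smul_eq_zpow_neg_sub_one hG.vertexSwap_mul_self G.invPerm_mul_self
      (hG.vertexSwap_eq_self_iff.2 hp), hn, ← mul_smul, G.invPerm_mul_self, one_smul]

theorem exists_isIso_lineGraph (hG : G.Bivalent) (hc : G.Connected) {p : G.E}
    (hp : p ∉ range G.s) : ∃ k, ∃ f : FGHom (lineGraph k) G, f.IsIso := by
  set σ := hG.vertexSwap
  set τ := G.invPerm
  have hσ : σ * σ = 1 := hG.vertexSwap_mul_self
  have hτ : τ * τ = 1 := G.invPerm_mul_self
  have hσp : σ • p = p := hG.vertexSwap_eq_self_iff.2 hp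
  have hτπ := smul_zpow_smul_eq_zpow_neg_sub_one hσ hτ hσp
  have hσπ := smul_zpow_smul_eq_zpow_neg hσ hτ hσp
  obtain ⟨k, hk⟩ : ∃ k, period (σ * τ) p = 2 * (k + 1) := by
    obtain ⟨d, hd⟩ := even_period_of_smul_eq hσ hτ G.inv_ne hσp
    have := period_pos_of_orderOf_pos (orderOf_pos (σ * τ)) p
    exact ⟨d - 1, by omega⟩
  have hper {a b : ℤ} : (σ * τ) ^ a • p = (σ * τ) ^ b • p ↔ (2 * (k + 1) : ℤ) ∣ a - b := by
    rw [zpow_smul_eq_zpow_smul_iff, hk]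
    push_cast
    rfl
  refine ⟨k, exists_isIso_of_bijective (lineGraph_bivalent k) hG
    (φ := fun q => (σ * τ) ^ lineExponent q • p)
    ⟨fun q q' h => eq_of_dvd_lineExponent_sub (hper.1 h), fun e => ?_⟩ ?_ ?_ ?_⟩
  · obtain ⟨n, hn⟩ := hG.exists_zpow_smul_eq_of_notMem_range hc hp e
    obtain ⟨q, hq⟩ := exists_lineExponent_dvd_sub k n
    exact ⟨q, (hper.2 hq).trans hn⟩
  · rintro ⟨j, _ | _⟩
    · show (σ * τ) ^ lineExponent (j, true) • p = τ • (σ * τ) ^ lineExponent (j, false) • p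
      rw [hτπ]
      simp [lineExponent]
    · show (σ * τ) ^ lineExponent (j, false) • p = τ • (σ * τ) ^ lineExponent (j, true) • p
      rw [hτπ]
      simp [lineExponent]
  · intro e he
    rcases lineGraph_eq_of_notMem_range he with rfl | rfl
    · simpa [lineExponent] using hp
    · rw [← hG.vertexSwap_eq_self_iff]
      show σ • (σ * τ) ^ lineExponent (Fin.last k, true) • p = _
      rw [hσπ, hper]
      exact ⟨1, by simp only [lineExponent, cond, Fin.val_last]; ring⟩
  · rintro ⟨i, _ | _⟩ ⟨i', _ | _⟩ (rfl : i = i') hne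
    · exact absurd rfl hne
    · show σ • (σ * τ) ^ lineExponent (i.succ, false) • p =
        (σ * τ) ^ lineExponent (i.castSucc, true) • p
      rw [hσπ]
      congr 2
      simp only [lineExponent, cond, Fin.val_succ, Fin.val_castSucc]
      push_cast
      ring
    · show σ • (σ * τ) ^ lineExponent (i.castSucc, true) • p =
        (σ * τ) ^ lineExponent (i.succ, false) • p
      rw [hσπ]
      congr 2
      simp only [lineExponent, cond, Fin.val_succ, Fin.val_castSucc]
      push_cast
      ring
    · exact absurd rfl hne

theorem exists_isIso_wheelGraph (hG : G.Bivalent) (hc : G.Connected) (hs : ∀ e, e ∈ range G.s)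
    (e₀ : G.E) : ∃ m, ∃ f : FGHom (wheelGraph m) G, f.IsIso := by
  set σ := hG.vertexSwap
  set τ := G.invPerm
  have hσ : σ * σ = 1 := hG.vertexSwap_mul_self
  have hτ : τ * τ = 1 := G.invPerm_mul_self
  have hσπ (n : ℤ) : σ • (σ * τ) ^ n • e₀ = τ • (σ * τ) ^ (n - 1) • e₀ := by
    rw [smul_smul, mul_zpow_eq_mul_zpow_sub_one hσ, mul_smul]
  obtain ⟨m, hm⟩ : ∃ m, period (σ * τ) e₀ = m + 1 :=
    Nat.exists_eq_add_one.2 (period_pos_of_orderOf_pos (orderOf_pos _) _)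
  have hper {a b : ℤ} : (σ * τ) ^ a • e₀ = (σ * τ) ^ b • e₀ ↔ ((m + 1 : ℕ) : ℤ) ∣ a - b := by
    rw [zpow_smul_eq_zpow_smul_iff, hm]
  have hσx (e : G.E) : σ • e ≠ e := mt hG.vertexSwap_eq_self_iff.1 (not_not.2 (hs e))
  refine ⟨m, exists_isIso_of_bijective (wheelGraph_bivalent m) hG (φ := wheelLayout σ τ e₀ m)
    ⟨wheelLayout_injective hσ hτ hσx G.inv_ne hm, fun e => ?_⟩ ?_
    (fun e he => absurd ⟨e, rfl⟩ he) ?_⟩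
  · obtain ⟨n, hn | hn⟩ := hG.exists_zpow_smul_eq hc e₀ e
    · obtain ⟨i, hi⟩ := exists_fin_dvd_sub m n
      exact ⟨(i, true), (hper.2 hi).trans hn⟩
    · obtain ⟨i, hi⟩ := exists_fin_dvd_sub m (n + 1)
      refine ⟨(i, false), ?_⟩
      show τ • (σ * τ) ^ ((i : ℤ) - 1) • e₀ = e
      have hi' : (σ * τ) ^ ((i : ℤ) - 1) • e₀ = (σ * τ) ^ n • e₀ :=
        hper.2 (by rwa [sub_sub, add_comm 1])
      rw [hi', hn, ← mul_smul, hτ, one_smul]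
  · rintro ⟨i, _ | _⟩
    · show (σ * τ) ^ ((i - 1 : Fin (m + 1)) : ℤ) • e₀ = τ • τ • (σ * τ) ^ ((i : ℤ) - 1) • e₀
      rw [← mul_smul, hτ, one_smul, hper]
      have := dvd_val_add_one_sub (i - 1)
      rwa [sub_add_cancel, dvd_sub_comm, ← sub_sub_eq_add_sub] at this
    · show τ • (σ * τ) ^ (((i + 1 : Fin (m + 1)) : ℤ) - 1) • e₀ = τ • (σ * τ) ^ (i : ℤ) • e₀
      congr 1
      exact hper.2 (by rw [sub_sub, add_comm 1]; exact dvd_val_add_one_sub i)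
  · rintro ⟨i, _ | _⟩ ⟨i', _ | _⟩ (rfl : i = i') hne
    · exact absurd rfl hne
    · show σ • τ • (σ * τ) ^ ((i : ℤ) - 1) • e₀ = (σ * τ) ^ (i : ℤ) • e₀
      rw [← hσπ, ← mul_smul, hσ, one_smul]
    · exact hσπ i
    · exact absurd rfl hne

end FG.Bivalent

/-- Every connected Feynman graph all of whose vertices are bivalent is
isomorphic to a line graph `L^k` (`k ≥ 0`) or a wheel graph `W^m` (`m ≥ 1`,
here `wheelGraph m = W^{m+1}`). -/
theorem bivalent_classification (G : FG) (hconn : G.Connected)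
    (hbiv : ∀ v : G.V, Nat.card {h : G.H // G.t h = v} = 2) :
    (∃ (k : ℕ) (f : FGHom G (lineGraph k)), f.IsIso) ∨
    (∃ (m : ℕ) (f : FGHom G (wheelGraph m)), f.IsIso) := by
  have hG : G.Bivalent := hbiv
  by_cases hs : ∀ e, e ∈ range G.s
  · obtain ⟨e₀⟩ : Nonempty G.E := by
      obtain ⟨e | v⟩ := hconn.1
      · exact ⟨e⟩
      · obtain ⟨h, -⟩ := hG.exists_t_eq v
        exact ⟨G.s h⟩
    obtain ⟨m, f, hf⟩ := hG.exists_isIso_wheelGraph hconn hs e₀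
    exact .inr ⟨m, hf.exists_symm⟩
  · obtain ⟨p, hp⟩ := not_forall.1 hs
    obtain ⟨k, f, hf⟩ := hG.exists_isIso_lineGraph hconn hp
    exact .inl ⟨k, hf.exists_symm⟩
end

section
/- A Feynman graph G with E ⊔ V ≠ ∅ is connected if and only if for every finite family H_1, …, H_k of Feynman graphs and every morphism f : G → H_1 ⨿ ⋯ ⨿ H_k into their disjoint union, f factors through exactly one of the canonical inclusions inc_i : H_i → H_1 ⨿ ⋯ ⨿ H_k. -/
/-- The disjoint union of a finite family of Feynman graphs. -/
def FG.fsum {n : ℕ} (Hs : Fin n → FG) : FG where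
  E := Σ i, (Hs i).E
  H := Σ i, (Hs i).H
  V := Σ i, (Hs i).V
  finE := inferInstance
  finH := inferInstance
  finV := inferInstance
  s := fun p => ⟨p.1, (Hs p.1).s p.2⟩
  t := fun p => ⟨p.1, (Hs p.1).t p.2⟩
  inv := fun p => ⟨p.1, (Hs p.1).inv p.2⟩
  s_inj := by
    rintro ⟨i, h⟩ ⟨j, h'⟩ he
    obtain ⟨rfl, he2⟩ := Sigma.mk.inj_iff.mp he
    rw [heq_eq_eq] at he2
    exact congrArg (Sigma.mk i) ((Hs i).s_inj he2)
  inv_inv := by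
    rintro ⟨i, e⟩
    simp [(Hs i).inv_inv e]
  inv_ne := by
    rintro ⟨i, e⟩ h
    simp only [Sigma.mk.inj_iff, heq_eq_eq, true_and] at h
    exact (Hs i).inv_ne e h

/-- The canonical inclusion of a summand into a disjoint union. -/
def FG.finclHom {n : ℕ} (Hs : Fin n → FG) (i : Fin n) : FGHom (Hs i) (FG.fsum Hs) where
  fE := fun e => ⟨i, e⟩
  fH := fun h => ⟨i, h⟩
  fV := fun v => ⟨i, v⟩
  comm_inv := fun _ => rfl
  comm_s := fun _ => rfl
  comm_t := fun _ => rfl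

/- ### Auxiliary lemmas -/

theorem FGHom.ext' {G G' : FG} {f g : FGHom G G'} (hE : f.fE = g.fE)
    (hH : f.fH = g.fH) (hV : f.fV = g.fV) : f = g := by
  cases f; cases g; cases hE; cases hH; cases hV; rfl

theorem sigma_eq_of_fst_eq {n : ℕ} {T : Fin n → Type} (p : Σ i, T i) (i : Fin n)
    (h : p.1 = i) : (⟨i, h ▸ p.2⟩ : Σ i, T i) = p := by
  cases p; subst h; rfl

theorem sigma_subtype_eq {ι α : Type} (P : ι → α → Prop) {i j : ι} (h : i = j)
    (x : α) (p : P i x) (q : P j x) :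
    (⟨i, ⟨x, p⟩⟩ : Σ k, {y // P k y}) = ⟨j, ⟨x, q⟩⟩ := by subst h; rfl

/-- The subgraph of `G` on one colour class of a compatible colouring. -/
def FG.restrict (G : FG) (cE : G.E → Bool) (cV : G.V → Bool)
    (hinv : ∀ e, cE (G.inv e) = cE e) (hts : ∀ h, cV (G.t h) = cE (G.s h))
    (b : Bool) : FG where
  E := {e // cE e = b}
  H := {h // cE (G.s h) = b}
  V := {v // cV v = b}
  finE := inferInstance
  finH := inferInstance
  finV := inferInstance
  s := fun h => ⟨G.s h.1, h.2⟩
  t := fun h => ⟨G.t h.1, (hts h.1).trans h.2⟩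
  inv := fun e => ⟨G.inv e.1, (hinv e.1).trans e.2⟩
  s_inj := fun _ _ h => Subtype.ext (G.s_inj (congrArg Subtype.val h))
  inv_inv := fun e => Subtype.ext (by simp [G.inv_inv])
  inv_ne := fun e h => G.inv_ne e.1 (congrArg Subtype.val h)

/-- In a connected graph, the component index of the image of a morphism into a
disjoint union is constant. -/
theorem idx_const {G : FG} (hc : G.Connected) {n : ℕ} (Hs : Fin n → FG)
    (f : FGHom G (FG.fsum Hs)) (x y : G.E ⊕ G.V) :
    Sum.elim (fun e => (f.fE e).1) (fun v => (f.fV v).1) x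
      = Sum.elim (fun e => (f.fE e).1) (fun v => (f.fV v).1) y := by
  set i0 := Sum.elim (fun e => (f.fE e).1) (fun v => (f.fV v).1) y with hi0
  have key := hc.2 (fun e => decide ((f.fE e).1 = i0))
      (fun v => decide ((f.fV v).1 = i0))
      (fun e => by simp only [f.comm_inv e]; rfl)
      (fun h => by simp only [f.comm_t h, f.comm_s h]; rfl) x y
  have hy : Sum.elim (fun e => decide ((f.fE e).1 = i0))
      (fun v => decide ((f.fV v).1 = i0)) y = true := by
    cases y <;> simp [hi0]
  rw [hy] at key
  cases x <;> simpa using key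

/-- A nonempty Feynman graph `G` is connected if and only if every morphism
from `G` into a finite disjoint union of Feynman graphs factors through
exactly one of the canonical inclusions. -/
theorem connected_iff_factors_through_unique_summand (G : FG)
    (hne : Nonempty (G.E ⊕ G.V)) :
    G.Connected ↔
      ∀ (n : ℕ) (Hs : Fin n → FG) (f : FGHom G (FG.fsum Hs)),
        ∃! i : Fin n, ∃ g : FGHom G (Hs i), (FG.finclHom Hs i).comp g = f := by
  constructor
  · intro hc n Hs f
    obtain ⟨x0⟩ := hne
    set i0 : Fin n := Sum.elim (fun e => (f.fE e).1) (fun v => (f.fV v).1) x0 with hi0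
    have hE : ∀ e : G.E, (f.fE e).1 = i0 := fun e => idx_const hc Hs f (.inl e) x0
    have hV : ∀ v : G.V, (f.fV v).1 = i0 := fun v => idx_const hc Hs f (.inr v) x0
    have hH : ∀ h : G.H, (f.fH h).1 = i0 := by
      intro h
      have := hE (G.s h)
      rw [f.comm_s h] at this
      exact this
    refine ⟨i0, ⟨⟨fun e => hE e ▸ (f.fE e).2, fun h => hH h ▸ (f.fH h).2,
        fun v => hV v ▸ (f.fV v).2, ?_, ?_, ?_⟩, ?_⟩, ?_⟩
    · intro e
      have : (⟨i0, hE (G.inv e) ▸ (f.fE (G.inv e)).2⟩ : Σ i, (Hs i).E)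
          = ⟨i0, (Hs i0).inv (hE e ▸ (f.fE e).2)⟩ := by
        rw [sigma_eq_of_fst_eq (f.fE (G.inv e)) i0 (hE (G.inv e)), f.comm_inv e]
        show (FG.fsum Hs).inv (f.fE e) = (FG.fsum Hs).inv ⟨i0, hE e ▸ (f.fE e).2⟩
        rw [sigma_eq_of_fst_eq (f.fE e) i0 (hE e)]
      exact eq_of_heq (Sigma.mk.inj_iff.mp this).2
    · intro h
      have : (⟨i0, hE (G.s h) ▸ (f.fE (G.s h)).2⟩ : Σ i, (Hs i).E)
          = ⟨i0, (Hs i0).s (hH h ▸ (f.fH h).2)⟩ := by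
        rw [sigma_eq_of_fst_eq (f.fE (G.s h)) i0 (hE (G.s h)), f.comm_s h]
        show (FG.fsum Hs).s (f.fH h) = (FG.fsum Hs).s ⟨i0, hH h ▸ (f.fH h).2⟩
        rw [sigma_eq_of_fst_eq (f.fH h) i0 (hH h)]
      exact eq_of_heq (Sigma.mk.inj_iff.mp this).2
    · intro h
      have : (⟨i0, hV (G.t h) ▸ (f.fV (G.t h)).2⟩ : Σ i, (Hs i).V)
          = ⟨i0, (Hs i0).t (hH h ▸ (f.fH h).2)⟩ := by
        rw [sigma_eq_of_fst_eq (f.fV (G.t h)) i0 (hV (G.t h)), f.comm_t h]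
        show (FG.fsum Hs).t (f.fH h) = (FG.fsum Hs).t ⟨i0, hH h ▸ (f.fH h).2⟩
        rw [sigma_eq_of_fst_eq (f.fH h) i0 (hH h)]
      exact eq_of_heq (Sigma.mk.inj_iff.mp this).2
    · refine FGHom.ext' (funext fun e => ?_) (funext fun h => ?_) (funext fun v => ?_)
      · exact sigma_eq_of_fst_eq (f.fE e) i0 (hE e)
      · exact sigma_eq_of_fst_eq (f.fH h) i0 (hH h)
      · exact sigma_eq_of_fst_eq (f.fV v) i0 (hV v)
    · rintro i' ⟨g', rfl⟩
      cases x0 with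
      | inl e0 => exact (hE e0).symm
      | inr v0 => exact (hV v0).symm
  · intro hfac
    refine ⟨hne, fun cE cV hinv hts x y => ?_⟩
    set idx : Bool → Fin 2 := fun b => if b then 1 else 0 with hidxdef
    have hidx : ∀ b, decide ((idx b) = 1) = b := by
      intro b; cases b <;> simp [hidxdef]
    set Hs : Fin 2 → FG := fun i => G.restrict cE cV hinv hts (decide (i = 1))
      with hHs
    let hf : FGHom G (FG.fsum Hs) :=
      { fE := fun e => ⟨idx (cE e), ⟨e, (hidx (cE e)).symm⟩⟩
        fH := fun h => ⟨idx (cE (G.s h)), ⟨h, (hidx (cE (G.s h))).symm⟩⟩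
        fV := fun v => ⟨idx (cV v), ⟨v, (hidx (cV v)).symm⟩⟩
        comm_inv := fun e =>
          sigma_subtype_eq (fun k e => cE e = decide (k = 1))
            (congrArg idx (hinv e)) (G.inv e) _ _
        comm_s := fun h => rfl
        comm_t := fun h =>
          sigma_subtype_eq (fun k v => cV v = decide (k = 1))
            (congrArg idx (hts h)) (G.t h) _ _ }
    obtain ⟨i0, ⟨g, hg⟩, _⟩ := hfac 2 Hs hf
    have hEc : ∀ e, cE e = decide (i0 = 1) := by
      intro e
      have : hf.fE e = ⟨i0, g.fE e⟩ := by rw [← hg]; rfl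
      have h1 : idx (cE e) = i0 := congrArg Sigma.fst this
      rw [← hidx (cE e), h1]
    have hVc : ∀ v, cV v = decide (i0 = 1) := by
      intro v
      have : hf.fV v = ⟨i0, g.fV v⟩ := by rw [← hg]; rfl
      have h1 : idx (cV v) = i0 := congrArg Sigma.fst this
      rw [← hidx (cV v), h1]
    cases x <;> cases y <;> simp [hEc, hVc]
end

section
/- A Feynman graph is connected if and only if it is path connected. -/
/-- An element of `E ⊔ V` lies in the image of a path `p : L^k → G` (on edges
and vertices respectively). -/
def InPathImage {k : ℕ} {G : FG} (p : FGHom (lineGraph k) G) : G.E ⊕ G.V → Prop :=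
  Sum.elim (fun e => ∃ a, p.fE a = e) (fun v => ∃ a, p.fV a = v)

/-- A Feynman graph is path connected if `E ⊔ V` is nonempty and every two
distinct elements of `E ⊔ V` are connected by a path. -/
def FG.PathConnected (G : FG) : Prop :=
  Nonempty (G.E ⊕ G.V) ∧
  ∀ x y : G.E ⊕ G.V, x ≠ y →
    ∃ (k : ℕ) (p : FGHom (lineGraph k) G), InPathImage p x ∧ InPathImage p y

/-! A path `L^k → G` amounts to a sequence of edges `e₀, …, e_k` in which `e_{i+1}` is reached
from `e_i` through a vertex carrying half-edges attached to `inv e_i` and to `e_{i+1}`. Line graphs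
are connected, so a compatible colouring is constant along any path.

Conversely, fix `x` and colour an edge by whether some path through `x` ends with it, in either
orientation, and a vertex by whether some path through `x` visits it. This colouring is
compatible: a path ending with `s h` either enters `t h` through `h`, and may then leave through
any half-edge there, or is the single pair of `s h` and may be reversed. In a connected graph it
is therefore constant, and it is true at `x`. -/

namespace FG

variable {G : FG}

/-- A path `L^k → G` unfolded: `edge j` is the image of `l_{2j}`, and `out i`, `into i` are the
half-edges at the `i`-th vertex attached to `inv (edge i)` and to `edge (i + 1)`. -/
structure Walk (G : FG) (k : ℕ) where
  edge : Fin (k + 1) → G.E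
  out : Fin k → G.H
  into : Fin k → G.H
  s_out : ∀ i, G.s (out i) = G.inv (edge i.castSucc)
  s_into : ∀ i, G.s (into i) = edge i.succ
  t_out : ∀ i, G.t (out i) = G.t (into i)

namespace Walk

variable {k : ℕ}

def toHom (w : G.Walk k) : FGHom (lineGraph k) G where
  fE q := bif q.2 then G.inv (w.edge q.1) else w.edge q.1
  fH q := bif q.2 then w.out q.1 else w.into q.1
  fV i := G.t (w.out i)
  comm_inv := by rintro ⟨j, _ | _⟩ <;> simp [lineGraph, G.inv_inv]
  comm_s := by rintro ⟨i, _ | _⟩ <;> simp [lineGraph, w.s_out, w.s_into]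
  comm_t := by rintro ⟨i, _ | _⟩ <;> simp [lineGraph, w.t_out]

lemma inPathImage_edge (w : G.Walk k) (j : Fin (k + 1)) :
    InPathImage w.toHom (.inl (w.edge j)) :=
  ⟨(j, false), rfl⟩

lemma inPathImage_inv_edge (w : G.Walk k) (j : Fin (k + 1)) :
    InPathImage w.toHom (.inl (G.inv (w.edge j))) :=
  ⟨(j, true), rfl⟩

lemma inPathImage_vertex (w : G.Walk k) (i : Fin k) :
    InPathImage w.toHom (.inr (G.t (w.out i))) :=
  ⟨i, rfl⟩

def single (e : G.E) : G.Walk 0 where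
  edge _ := e
  out := Fin.elim0
  into := Fin.elim0
  s_out i := i.elim0
  s_into i := i.elim0
  t_out i := i.elim0

def snoc (w : G.Walk k) (a b : G.H) (ha : G.s a = G.inv (w.edge (Fin.last k)))
    (hab : G.t a = G.t b) : G.Walk (k + 1) where
  edge := Fin.snoc w.edge (G.s b)
  out := Fin.snoc w.out a
  into := Fin.snoc w.into b
  s_out := Fin.lastCases (by simpa using ha) fun i => by simpa using w.s_out i
  s_into := Fin.lastCases (by simp) fun i => by
    rw [← Fin.castSucc_succ]
    simp only [Fin.snoc_castSucc]
    exact w.s_into i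
  t_out := Fin.lastCases (by simpa using hab) fun i => by simpa using w.t_out i

section snoc

variable (w : G.Walk k) (a b : G.H) (ha : G.s a = G.inv (w.edge (Fin.last k)))
  (hab : G.t a = G.t b)

@[simp]
lemma snoc_edge_last : (w.snoc a b ha hab).edge (Fin.last (k + 1)) = G.s b :=
  Fin.snoc_last (α := fun _ => G.E) ..

@[simp]
lemma snoc_edge_castSucc (j : Fin (k + 1)) : (w.snoc a b ha hab).edge j.castSucc = w.edge j :=
  Fin.snoc_castSucc (α := fun _ => G.E) ..

@[simp]
lemma snoc_out_castSucc (i : Fin k) : (w.snoc a b ha hab).out i.castSucc = w.out i :=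
  Fin.snoc_castSucc (α := fun _ => G.H) ..

@[simp]
lemma snoc_out_last : (w.snoc a b ha hab).out (Fin.last k) = a :=
  Fin.snoc_last (α := fun _ => G.H) ..

lemma inPathImage_snoc {z : G.E ⊕ G.V} (hz : InPathImage w.toHom z) :
    InPathImage (w.snoc a b ha hab).toHom z := by
  rcases z with e | v
  · obtain ⟨⟨j, c⟩, rfl⟩ := hz
    exact ⟨(j.castSucc, c), by simp [toHom]⟩
  · obtain ⟨i, rfl⟩ := hz
    exact ⟨i.castSucc, congrArg G.t (snoc_out_castSucc ..)⟩

end snoc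

end Walk

/-- `G.Reach x e`: some path through `x` ends with the edge `e`, oriented so that it continues
through any half-edge attached to `G.inv e`. -/
inductive Reach (G : FG) (x : G.E ⊕ G.V) : G.E → Prop
  | pair {e : G.E} : x = .inl e ∨ x = .inl (G.inv e) → G.Reach x e
  | vertex {h : G.H} : x = .inr (G.t h) → G.Reach x (G.s h)
  | step {e : G.E} {a b : G.H} :
      G.Reach x e → G.s a = G.inv e → G.t a = G.t b → G.Reach x (G.s b)

lemma Reach.exists_walk {x : G.E ⊕ G.V} {e : G.E} (hr : G.Reach x e) :
    ∃ (k : ℕ) (w : G.Walk k), InPathImage w.toHom x ∧ w.edge (Fin.last k) = e := by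
  induction hr with
  | @pair e hx =>
    refine ⟨0, Walk.single e, ?_, rfl⟩
    rcases hx with rfl | rfl
    exacts [(Walk.single e).inPathImage_edge 0, (Walk.single e).inPathImage_inv_edge 0]
  | @vertex h hx =>
    let w := (Walk.single (G.inv (G.s h))).snoc h h (G.inv_inv _).symm rfl
    exact ⟨1, w, hx ▸ w.inPathImage_vertex 0, Walk.snoc_edge_last ..⟩
  | step _ ha hab ih =>
    obtain ⟨k, w, hx, rfl⟩ := ih
    exact ⟨k + 1, w.snoc _ _ ha hab, w.inPathImage_snoc _ _ ha hab hx, w.snoc_edge_last ..⟩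

def Reachable (G : FG) (x : G.E ⊕ G.V) : G.E ⊕ G.V → Prop
  | .inl e => G.Reach x e ∨ G.Reach x (G.inv e)
  | .inr v => x = .inr v ∨ ∃ a, G.t a = v ∧ G.Reach x (G.inv (G.s a))

lemma Reach.reachable_t {x : G.E ⊕ G.V} {h : G.H} (hr : G.Reach x (G.s h)) :
    G.Reachable x (.inr (G.t h)) := by
  generalize hf : G.s h = f at hr
  cases hr with
  | pair hx =>
    subst hf
    exact .inr ⟨h, rfl, .pair (by rwa [G.inv_inv, or_comm])⟩
  | @vertex h' hx =>
    obtain rfl : h' = h := G.s_inj hf.symm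
    exact .inl hx
  | @step e a b hr ha hab =>
    obtain rfl : b = h := G.s_inj hf.symm
    exact .inr ⟨a, hab, by rwa [ha, G.inv_inv]⟩

lemma reachable_self (x : G.E ⊕ G.V) : G.Reachable x x := by
  rcases x with e | v
  exacts [.inl (.pair (.inl rfl)), .inl rfl]

lemma reachable_inv_iff (x : G.E ⊕ G.V) (e : G.E) :
    G.Reachable x (.inl (G.inv e)) ↔ G.Reachable x (.inl e) := by
  simp only [Reachable, G.inv_inv, or_comm]

lemma reachable_t_iff (x : G.E ⊕ G.V) (h : G.H) :
    G.Reachable x (.inr (G.t h)) ↔ G.Reachable x (.inl (G.s h)) := by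
  constructor
  · rintro (rfl | ⟨a, hah, hr⟩)
    · exact .inl (.vertex rfl)
    · exact .inl (.step hr (G.inv_inv _).symm hah)
  · rintro (hr | hr)
    · exact hr.reachable_t
    · exact .inr ⟨h, rfl, hr⟩

lemma Reachable.exists_path {x y : G.E ⊕ G.V} (hy : G.Reachable x y) (hxy : x ≠ y) :
    ∃ (k : ℕ) (p : FGHom (lineGraph k) G), InPathImage p x ∧ InPathImage p y := by
  rcases y with f | v
  · rcases hy with hr | hr <;> obtain ⟨k, w, hx, hf⟩ := hr.exists_walk
    · exact ⟨k, w.toHom, hx, hf ▸ w.inPathImage_edge _⟩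
    · exact ⟨k, w.toHom, hx, by simpa [hf, G.inv_inv] using w.inPathImage_inv_edge (Fin.last k)⟩
  · obtain ⟨a, rfl, hr⟩ := hy.resolve_left hxy
    obtain ⟨k, w, hx, hf⟩ := hr.exists_walk
    let w' := w.snoc a a (by rw [hf, G.inv_inv]) rfl
    exact ⟨k + 1, w'.toHom, w.inPathImage_snoc _ _ _ _ hx,
      by simpa [w'] using w'.inPathImage_vertex (Fin.last k)⟩

lemma Connected.of_compatible {P : G.E ⊕ G.V → Prop} (hc : G.Connected)
    (hinv : ∀ e, P (.inl (G.inv e)) ↔ P (.inl e)) (ht : ∀ h, P (.inr (G.t h)) ↔ P (.inl (G.s h)))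
    {x y : G.E ⊕ G.V} (hx : P x) : P y := by
  classical
  have := hc.2 (fun e => decide (P (.inl e))) (fun v => decide (P (.inr v)))
    (fun e => decide_eq_decide.2 (hinv e)) (fun h => decide_eq_decide.2 (ht h)) x y
  rcases x with _ | _ <;> rcases y with _ | _ <;> simp_all

lemma Connected.reachable (hc : G.Connected) (x y : G.E ⊕ G.V) : G.Reachable x y :=
  hc.of_compatible (reachable_inv_iff x) (reachable_t_iff x) (reachable_self x)

theorem Connected.pathConnected (hc : G.Connected) : G.PathConnected :=
  ⟨hc.1, fun x y hxy => (hc.reachable x y).exists_path hxy⟩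

end FG

theorem lineGraph_connected (k : ℕ) : (lineGraph k).Connected := by
  refine ⟨⟨.inl (0, false)⟩, fun cE cV hinv ht => ?_⟩
  have hvertex (i : Fin k) : cV i = cE (i.castSucc, false) :=
    (ht (i, true)).trans (hinv (i.castSucc, false))
  have hedge (j : Fin (k + 1)) : cE (j, false) = cE (0, false) := by
    induction j using Fin.induction with
    | zero => rfl
    | succ i ih => exact (ht (i, false)).symm.trans ((hvertex i).trans ih)
  have hconst : ∀ z, Sum.elim cE cV z = cE (0, false) := by
    rintro (⟨j, _ | _⟩ | i)
    · exact hedge j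
    · exact (hinv (j, false)).trans (hedge j)
    · exact (hvertex i).trans (hedge _)
  exact fun x y => (hconst x).trans (hconst y).symm

lemma FGHom.sumElim_map_eq {G' G : FG} (f : FGHom G' G) (hG' : G'.Connected)
    {cE : G.E → Bool} {cV : G.V → Bool} (hinv : ∀ e, cE (G.inv e) = cE e)
    (ht : ∀ h, cV (G.t h) = cE (G.s h)) (x y : G'.E ⊕ G'.V) :
    Sum.elim cE cV (Sum.map f.fE f.fV x) = Sum.elim cE cV (Sum.map f.fE f.fV y) := by
  have := hG'.2 (cE ∘ f.fE) (cV ∘ f.fV) (fun e => by simp [f.comm_inv, hinv])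
    (fun h => by simp [f.comm_t, f.comm_s, ht]) x y
  simpa only [← Function.comp_apply (f := Sum.elim cE cV), Sum.elim_comp_map] using this

lemma InPathImage.exists_sumMap_eq {k : ℕ} {G : FG} {p : FGHom (lineGraph k) G}
    {x : G.E ⊕ G.V} (hx : InPathImage p x) : ∃ x', Sum.map p.fE p.fV x' = x := by
  rcases x with _ | _ <;> obtain ⟨x', rfl⟩ := hx
  exacts [⟨.inl x', rfl⟩, ⟨.inr x', rfl⟩]

theorem FG.PathConnected.connected {G : FG} (hp : G.PathConnected) : G.Connected := by
  refine ⟨hp.1, fun cE cV hinv ht x y => ?_⟩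
  obtain rfl | hxy := eq_or_ne x y
  · rfl
  obtain ⟨k, p, hx, hy⟩ := hp.2 x y hxy
  obtain ⟨x', rfl⟩ := hx.exists_sumMap_eq
  obtain ⟨y', rfl⟩ := hy.exists_sumMap_eq
  exact p.sumElim_map_eq (lineGraph_connected k) hinv ht x' y'

/-- A Feynman graph is connected if and only if it is path connected. -/
theorem connected_iff_pathConnected (G : FG) :
    G.Connected ↔ G.PathConnected :=
  ⟨FG.Connected.pathConnected, FG.PathConnected.connected⟩
end

section
/- Let G be a connected Feynman graph and let e_1 ≠ e_2 be two distinct edges of G. Then there exist k ≥ 0 and a locally injective morphism p : L^k → G such that e_1 and e_2 both lie in the image of the edge component p_E. -/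
/-!
A locally injective path `L^k → G` is the same as a non-backtracking walk: a sequence of
edges in which consecutive edges `e, f` satisfy `e ≠ inv f` with `e` and `inv f` attached to
a common vertex. Consider the edges `f` such that some non-backtracking walk joins `e₁` or
`inv e₁` to `f` or `inv f`. This set is closed under `inv` and under passing to an edge at a
common vertex: a walk ending at `x` turns into `inv y`, and a walk ending at `inv x` either
came from `y` or can be rerouted through its last turn to `inv y`. Connectedness of `G`
then forces the set to contain `e₂`.
-/

open scoped SetRel

theorem RelSeries.exists_head_last_of_reflTransGen {α : Type*} {r : SetRel α α} {a b : α}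
    (h : Relation.ReflTransGen (· ~[r] ·) a b) :
    ∃ p : RelSeries r, p.head = a ∧ p.last = b := by
  induction h with
  | refl =>
    exact ⟨RelSeries.singleton r a, RelSeries.head_singleton a, RelSeries.last_singleton a⟩
  | tail _ hbc ih =>
    obtain ⟨p, rfl, rfl⟩ := ih
    exact ⟨p.snoc _ hbc, RelSeries.head_snoc p _ hbc, RelSeries.last_snoc p _ hbc⟩

theorem FGHom.exists_fE_eq_inv {G G' : FG} (p : FGHom G G') {e : G'.E}
    (h : ∃ x, p.fE x = e) : ∃ x, p.fE x = G'.inv e := by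
  obtain ⟨x, rfl⟩ := h
  exact ⟨G.inv x, p.comm_inv x⟩

namespace FG

variable {G : FG}

def ShareVertex (G : FG) (x y : G.E) : Prop :=
  ∃ hx hy, G.s hx = x ∧ G.s hy = y ∧ G.t hx = G.t hy

theorem ShareVertex.symm {x y : G.E} (h : G.ShareVertex x y) : G.ShareVertex y x :=
  let ⟨hx, hy, hsx, hsy, ht⟩ := h
  ⟨hy, hx, hsy, hsx, ht.symm⟩

theorem ShareVertex.trans {x y z : G.E} (hxy : G.ShareVertex x y) (hyz : G.ShareVertex y z) :
    G.ShareVertex x z := by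
  obtain ⟨hx, hy, hsx, rfl, hxy⟩ := hxy
  obtain ⟨hy', hz, hsy', hsz, hyz⟩ := hyz
  obtain rfl := G.s_inj hsy'
  exact ⟨hx, hz, hsx, hsz, hxy.trans hyz⟩

/-- `e ~[G.Turn] f`: a walk arriving along `e` leaves its vertex along a different half-edge,
that of `inv f`, and continues along `f`. -/
def Turn (G : FG) : SetRel G.E G.E :=
  {p | p.1 ≠ G.inv p.2 ∧ G.ShareVertex p.1 (G.inv p.2)}

theorem turn_inv_of_shareVertex {x y : G.E} (hxy : G.ShareVertex x y) (hne : x ≠ y) :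
    x ~[G.Turn] G.inv y :=
  ⟨by rwa [G.inv_inv], by rwa [G.inv_inv]⟩

def linePath {k : ℕ} (c : Fin (k + 1) → G.E) (hin hout : Fin k → G.H)
    (hs_in : ∀ i, G.s (hin i) = c i.castSucc) (hs_out : ∀ i, G.s (hout i) = G.inv (c i.succ))
    (ht : ∀ i, G.t (hin i) = G.t (hout i)) : FGHom (lineGraph k) G where
  fE x := if x.2 then c x.1 else G.inv (c x.1)
  fH x := if x.2 then hin x.1 else hout x.1
  fV i := G.t (hin i)
  comm_inv := by rintro ⟨i, _ | _⟩ <;> simp [lineGraph, G.inv_inv]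
  comm_s := by rintro ⟨i, _ | _⟩ <;> simp [lineGraph, hs_in, hs_out]
  comm_t := by rintro ⟨i, _ | _⟩ <;> simp [lineGraph, ht]

theorem linePath_locInj {k : ℕ} (c : Fin (k + 1) → G.E) (hin hout : Fin k → G.H)
    (hs_in : ∀ i, G.s (hin i) = c i.castSucc) (hs_out : ∀ i, G.s (hout i) = G.inv (c i.succ))
    (ht : ∀ i, G.t (hin i) = G.t (hout i))
    (hne : ∀ i : Fin k, c i.castSucc ≠ G.inv (c i.succ)) :
    (linePath c hin hout hs_in hs_out ht).LocInj := by
  have hin_ne_hout (i : Fin k) : hin i ≠ hout i := fun h =>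
    hne i (by rw [← hs_in, ← hs_out, h])
  rintro ⟨i, _ | _⟩ ⟨j, _ | _⟩ (rfl : i = j) hH
  · rfl
  · exact absurd hH.symm (hin_ne_hout i)
  · exact absurd hH (hin_ne_hout i)
  · rfl

theorem exists_locInj_of_relSeries (p : RelSeries G.Turn) :
    ∃ q : FGHom (lineGraph p.length) G, q.LocInj ∧ ∀ i, q.fE (i, true) = p i := by
  choose hin hout hs_in hs_out ht using fun i => (p.step i).2
  exact ⟨linePath p hin hout hs_in hs_out ht,
    linePath_locInj p hin hout hs_in hs_out ht fun i => (p.step i).1, fun _ => rfl⟩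

def Reaches (G : FG) (e f : G.E) : Prop :=
  ∃ a b, (e = a ∨ e = G.inv a) ∧ (f = b ∨ f = G.inv b) ∧
    Relation.ReflTransGen (· ~[G.Turn] ·) a b

theorem Reaches.refl (e : G.E) : G.Reaches e e :=
  ⟨e, e, .inl rfl, .inl rfl, .refl⟩

theorem Reaches.inv_right {e f : G.E} (h : G.Reaches e f) : G.Reaches e (G.inv f) := by
  obtain ⟨a, b, ha, hb | rfl, hab⟩ := h
  · exact ⟨a, b, ha, .inr (congrArg G.inv hb), hab⟩
  · exact ⟨a, b, ha, .inl (G.inv_inv b), hab⟩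

theorem Reaches.of_shareVertex {e x y : G.E} (h : G.Reaches e x) (hxy : G.ShareVertex x y) :
    G.Reaches e y := by
  by_cases hne : x = y
  · exact hne ▸ h
  obtain ⟨a, b, ha, rfl | rfl, hab⟩ := h
  · exact ⟨a, G.inv y, ha, .inr (G.inv_inv y).symm,
      hab.tail (turn_inv_of_shareVertex hxy hne)⟩
  rcases hab.cases_tail with rfl | ⟨c, hac, -, hcx⟩
  · refine ⟨G.inv b, G.inv y, ?_, .inr (G.inv_inv y).symm,
      .single (turn_inv_of_shareVertex hxy hne)⟩
    rcases ha with rfl | rfl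
    · exact .inr (G.inv_inv e).symm
    · exact .inl rfl
  have hcy : G.ShareVertex c y := hcx.trans hxy
  by_cases hc : c = y
  · exact ⟨a, c, ha, .inl hc.symm, hac⟩
  · exact ⟨a, G.inv y, ha, .inr (G.inv_inv y).symm, hac.tail (turn_inv_of_shareVertex hcy hc)⟩

theorem exists_locInj_path_of_reaches {e f : G.E} (h : G.Reaches e f) :
    ∃ (k : ℕ) (p : FGHom (lineGraph k) G),
      p.LocInj ∧ (∃ a, p.fE a = e) ∧ (∃ a, p.fE a = f) := by
  obtain ⟨a, b, ha, hb, hab⟩ := h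
  obtain ⟨s, rfl, rfl⟩ := RelSeries.exists_head_last_of_reflTransGen hab
  obtain ⟨q, hq, hqs⟩ := exists_locInj_of_relSeries s
  have hmem : ∀ i e, (e = s i ∨ e = G.inv (s i)) → ∃ x, q.fE x = e := by
    rintro i e (rfl | rfl)
    exacts [⟨_, hqs i⟩, q.exists_fE_eq_inv ⟨_, hqs i⟩]
  exact ⟨_, q, hq, hmem 0 e ha, hmem (Fin.last _) f hb⟩

theorem Connected.forall_of_shareVertex_closed (hG : G.Connected) {P : G.E → Prop}
    (hinv : ∀ e, P e → P (G.inv e)) (hshare : ∀ x y, G.ShareVertex x y → P x → P y)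
    {e₀ : G.E} (h₀ : P e₀) (e : G.E) : P e := by
  classical
  have hcol := hG.2 (fun e => decide (P e)) (fun v => decide (∃ h, G.t h = v ∧ P (G.s h)))
    (fun e => decide_eq_decide.2 ⟨fun h => G.inv_inv e ▸ hinv _ h, hinv e⟩)
    (fun h => decide_eq_decide.2
      ⟨fun ⟨h', ht, hP⟩ => hshare _ _ ⟨h', h, rfl, rfl, ht⟩ hP,
        fun hP => ⟨h, rfl, hP⟩⟩)
    (.inl e) (.inl e₀)
  simpa [h₀] using hcol

end FG

theorem exists_locallyInjective_path_connecting_edges_general (G : FG)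
    (hconn : G.Connected) (e₁ e₂ : G.E) :
    ∃ (k : ℕ) (p : FGHom (lineGraph k) G),
      p.LocInj ∧ (∃ a, p.fE a = e₁) ∧ (∃ a, p.fE a = e₂) :=
  FG.exists_locInj_path_of_reaches <|
    hconn.forall_of_shareVertex_closed (P := G.Reaches e₁) (fun _ => FG.Reaches.inv_right)
      (fun _ _ hxy h => h.of_shareVertex hxy) (FG.Reaches.refl e₁) e₂

/-- In a connected Feynman graph, any two distinct edges are connected by a
locally injective path. -/
theorem exists_locallyInjective_path_connecting_edges (G : FG)
    (hconn : G.Connected) (e₁ e₂ : G.E) (hne : e₁ ≠ e₂) :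
    ∃ (k : ℕ) (p : FGHom (lineGraph k) G),
      p.LocInj ∧ (∃ a, p.fE a = e₁) ∧ (∃ a, p.fE a = e₂) :=
  exists_locallyInjective_path_connecting_edges_general G hconn e₁ e₂
end

section
/- Let f : G' → G be an étale morphism of Feynman graphs, where G is connected, G' is nonempty (E' ⊔ V' ≠ ∅), and f_E maps every port of G' to a port of G (f_E(E'_0) ⊆ E_0). Then f_E, f_H and f_V are all surjective. If moreover G' is connected and E'_0 ≠ ∅, then f is an isomorphism if and only if f is boundary-preserving, i.e. f_E restricts to a bijection E'_0 → E_0. -/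
/-- An étale morphism `f : G' → G` with `G` connected, `G'` nonempty, taking
ports to ports, is surjective on edges, half-edges and vertices.  If moreover
`G'` is connected with nonempty boundary, then `f` is an isomorphism if and
only if it is boundary-preserving (it restricts to a bijection between the
sets of ports). -/
theorem etale_portPreserving_surjective_and_iso_iff_boundaryPreserving
    (G' G : FG) (f : FGHom G' G) (het : f.Etale) (hconn : G.Connected)
    (hne : Nonempty (G'.E ⊕ G'.V))
    (hports : ∀ e : G'.E, G'.IsPort e → G.IsPort (f.fE e)) :
    (Function.Surjective f.fE ∧ Function.Surjective f.fH ∧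
      Function.Surjective f.fV) ∧
    (G'.Connected → (∃ e : G'.E, G'.IsPort e) →
      (f.IsIso ↔ Set.BijOn f.fE {e | G'.IsPort e} {e | G.IsPort e})) := by
  classical
  obtain ⟨hloc, hlift⟩ := het
  -- key: any edge of `G'` mapping onto an attached edge of `G` is itself attached,
  -- with a half-edge lifting the one in `G`.
  have key : ∀ (h : G.H) (e' : G'.E), f.fE e' = G.s h →
      ∃ h' : G'.H, G'.s h' = e' ∧ f.fH h' = h := by
    intro h e' he
    have hmem : e' ∈ Set.range G'.s := by
      by_contra hp
      exact hports e' hp ⟨h, he.symm⟩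
    obtain ⟨h', hs⟩ := hmem
    refine ⟨h', hs, G.s_inj ?_⟩
    rw [← f.comm_s, hs, he]
  -- surjectivity via connectedness of G
  have hallmem : ∀ x : G.E ⊕ G.V,
      Sum.elim (fun e => e ∈ Set.range f.fE) (fun v => v ∈ Set.range f.fV) x := by
    have hinv : ∀ e, (decide (e ∈ Set.range f.fE) : Bool) = decide ((G.inv e) ∈ Set.range f.fE) := by
      intro e
      rw [decide_eq_decide]
      constructor
      · rintro ⟨e', rfl⟩
        exact ⟨G'.inv e', f.comm_inv e'⟩
      · rintro ⟨e', he⟩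
        refine ⟨G'.inv e', ?_⟩
        rw [f.comm_inv, he, G.inv_inv]
    have hcomp : ∀ h : G.H,
        (decide ((G.t h) ∈ Set.range f.fV) : Bool) = decide ((G.s h) ∈ Set.range f.fE) := by
      intro h
      rw [decide_eq_decide]
      constructor
      · rintro ⟨v, hv⟩
        obtain ⟨h', _, hH⟩ := hlift v h hv.symm
        exact ⟨G'.s h', by rw [f.comm_s, hH]⟩
      · rintro ⟨e', he⟩
        obtain ⟨h', _, hH⟩ := key h e' he
        exact ⟨G'.t h', by rw [f.comm_t, hH]⟩
    have hbase : ∃ x₀ : G.E ⊕ G.V,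
        Sum.elim (fun e => decide (e ∈ Set.range f.fE)) (fun v => decide (v ∈ Set.range f.fV)) x₀
          = true := by
      cases hne.some with
      | inl e' => exact ⟨Sum.inl (f.fE e'), by simp⟩
      | inr v' => exact ⟨Sum.inr (f.fV v'), by simp⟩
    obtain ⟨x₀, hx₀⟩ := hbase
    intro x
    have hx := hconn.2 (fun e => decide (e ∈ Set.range f.fE))
      (fun v => decide (v ∈ Set.range f.fV)) (fun e => (hinv e).symm) hcomp x x₀
    rw [hx₀] at hx
    cases x with
    | inl e => simpa using hx
    | inr v => simpa using hx
  have hsE : Function.Surjective f.fE := fun e => hallmem (Sum.inl e)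
  have hsV : Function.Surjective f.fV := fun v => hallmem (Sum.inr v)
  have hsH : Function.Surjective f.fH := by
    intro h
    obtain ⟨v, hv⟩ := hsV (G.t h)
    obtain ⟨h', _, hH⟩ := hlift v h hv.symm
    exact ⟨h', hH⟩
  refine ⟨⟨hsE, hsH, hsV⟩, ?_⟩
  rintro _hconn' ⟨e₀', hport₀⟩
  constructor
  · rintro ⟨hEbij, _, _⟩
    refine ⟨fun e' he' => hports e' he', fun a _ b _ hab => hEbij.1 hab, ?_⟩
    intro e he
    obtain ⟨e', rfl⟩ := hsE e
    refine ⟨e', ?_, rfl⟩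
    rintro ⟨h', hs⟩
    exact he ⟨f.fH h', by rw [← f.comm_s, hs]⟩
  · intro hbij
    -- injectivity predicates on fibres
    set PE : G.E → Prop := fun e => ∀ e₁ e₂ : G'.E, f.fE e₁ = e → f.fE e₂ = e → e₁ = e₂ with hPE
    set PV : G.V → Prop := fun v => ∀ v₁ v₂ : G'.V, f.fV v₁ = v → f.fV v₂ = v → v₁ = v₂ with hPV
    have hinvP₁ : ∀ e, PE e → PE (G.inv e) := by
      intro e hp e₁ e₂ h1 h2
      have h1' : f.fE (G'.inv e₁) = e := by rw [f.comm_inv, h1, G.inv_inv]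
      have h2' : f.fE (G'.inv e₂) = e := by rw [f.comm_inv, h2, G.inv_inv]
      have := congrArg G'.inv (hp _ _ h1' h2')
      rwa [G'.inv_inv, G'.inv_inv] at this
    have hinvP : ∀ e, PE (G.inv e) ↔ PE e := by
      intro e
      constructor
      · intro hp
        have := hinvP₁ (G.inv e) hp
        rwa [G.inv_inv] at this
      · exact hinvP₁ e
    have hEV : ∀ h : G.H, PV (G.t h) ↔ PE (G.s h) := by
      intro h
      constructor
      · intro hp e₁ e₂ h1 h2
        obtain ⟨h₁', hs₁, hH₁⟩ := key h e₁ h1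
        obtain ⟨h₂', hs₂, hH₂⟩ := key h e₂ h2
        have hv : G'.t h₁' = G'.t h₂' :=
          hp _ _ (by rw [f.comm_t, hH₁]) (by rw [f.comm_t, hH₂])
        have hh : h₁' = h₂' := hloc _ _ hv (by rw [hH₁, hH₂])
        rw [← hs₁, ← hs₂, hh]
      · intro hp v₁ v₂ h1 h2
        obtain ⟨h₁', ht₁, hH₁⟩ := hlift v₁ h h1.symm
        obtain ⟨h₂', ht₂, hH₂⟩ := hlift v₂ h h2.symm
        have hs : G'.s h₁' = G'.s h₂' :=
          hp _ _ (by rw [f.comm_s, hH₁]) (by rw [f.comm_s, hH₂])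
        have hh : h₁' = h₂' := G'.s_inj hs
        rw [← ht₁, ← ht₂, hh]
    have hPbase : PE (f.fE e₀') := by
      intro e₁ e₂ h1 h2
      have hp1 : G'.IsPort e₁ := by
        rintro ⟨h', hs⟩
        exact hports e₀' hport₀ ⟨f.fH h', by rw [← f.comm_s, hs, h1]⟩
      have hp2 : G'.IsPort e₂ := by
        rintro ⟨h', hs⟩
        exact hports e₀' hport₀ ⟨f.fH h', by rw [← f.comm_s, hs, h2]⟩
      exact hbij.2.1 hp1 hp2 (h1.trans h2.symm)
    have hallP : ∀ x : G.E ⊕ G.V, Sum.elim PE PV x := by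
      intro x
      have hx := hconn.2 (fun e => decide (PE e)) (fun v => decide (PV v))
        (fun e => decide_eq_decide.mpr (hinvP e))
        (fun h => decide_eq_decide.mpr (hEV h)) x (Sum.inl (f.fE e₀'))
      have hrhs : Sum.elim (fun e => decide (PE e)) (fun v => decide (PV v))
          (Sum.inl (f.fE e₀')) = true := by
        simpa using hPbase
      rw [hrhs] at hx
      cases x with
      | inl e => simpa using hx
      | inr v => simpa using hx
    have hEinj : Function.Injective f.fE := fun e₁ e₂ h =>
      hallP (Sum.inl (f.fE e₂)) e₁ e₂ h rfl
    have hVinj : Function.Injective f.fV := fun v₁ v₂ h =>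
      hallP (Sum.inr (f.fV v₂)) v₁ v₂ h rfl
    have hHinj : Function.Injective f.fH := by
      intro h₁ h₂ hh
      have ht : G'.t h₁ = G'.t h₂ := hVinj (by rw [f.comm_t, f.comm_t, hh])
      exact hloc h₁ h₂ ht hh
    exact ⟨⟨hEinj, hsE⟩, ⟨hHinj, hsH⟩, ⟨hVinj, hsV⟩⟩
end

section
/- Let f : G' → G be an étale morphism of Feynman graphs such that G is connected and f_E maps every port of G' to a port of G (f_E(E'_0) ⊆ E_0). Then there exists k ∈ ℕ such that every fibre of f_V, every fibre of f_H, and every fibre of f_E has exactly k elements. -/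
/-- For an étale morphism `f : G' → G` into a connected graph `G` which takes
ports to ports, there is a `k ∈ ℕ` such that every fibre of `f_V`, of `f_H`
and of `f_E` has exactly `k` elements. -/
theorem etale_portPreserving_fibres_constant_card
    (G' G : FG) (f : FGHom G' G) (het : f.Etale) (hconn : G.Connected)
    (hports : ∀ e : G'.E, G'.IsPort e → G.IsPort (f.fE e)) :
    ∃ k : ℕ,
      (∀ v : G.V, Nat.card {v' : G'.V // f.fV v' = v} = k) ∧
      (∀ h : G.H, Nat.card {h' : G'.H // f.fH h' = h} = k) ∧
      (∀ e : G.E, Nat.card {e' : G'.E // f.fE e' = e} = k) := by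
  classical
  set NE : G.E → ℕ := fun e => Nat.card {e' : G'.E // f.fE e' = e} with hNE
  set NH : G.H → ℕ := fun h => Nat.card {h' : G'.H // f.fH h' = h} with hNH
  set NV : G.V → ℕ := fun v => Nat.card {v' : G'.V // f.fV v' = v} with hNV
  -- NE is inv-invariant
  have hinv : ∀ e, NE (G.inv e) = NE e := by
    intro e
    apply Nat.card_congr
    refine ⟨fun x => ⟨G'.inv x.1, ?_⟩, fun x => ⟨G'.inv x.1, ?_⟩, ?_, ?_⟩
    · rw [f.comm_inv, x.2, G.inv_inv]
    · rw [f.comm_inv, x.2]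
    · rintro ⟨x, hx⟩; simp [G'.inv_inv]
    · rintro ⟨x, hx⟩; simp [G'.inv_inv]
  -- NH h = NV (t h)
  have hHV : ∀ h, NH h = NV (G.t h) := by
    intro h
    apply Nat.card_congr
    apply Equiv.ofBijective (f := fun x : {h' : G'.H // f.fH h' = h} =>
      (⟨G'.t x.1, by rw [f.comm_t, x.2]⟩ : {v' : G'.V // f.fV v' = G.t h}))
    constructor
    · rintro ⟨h₁, e₁⟩ ⟨h₂, e₂⟩ hx
      simp only [Subtype.mk.injEq] at hx ⊢
      exact het.1 h₁ h₂ hx (e₁.trans e₂.symm)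
    · rintro ⟨v', hv'⟩
      obtain ⟨h', ht', hh'⟩ := het.2 v' h hv'.symm
      exact ⟨⟨h', hh'⟩, by simp [ht']⟩
  -- NE (s h) = NH h
  have hEH : ∀ h, NE (G.s h) = NH h := by
    intro h
    symm
    apply Nat.card_congr
    apply Equiv.ofBijective (f := fun x : {h' : G'.H // f.fH h' = h} =>
      (⟨G'.s x.1, by rw [f.comm_s, x.2]⟩ : {e' : G'.E // f.fE e' = G.s h}))
    constructor
    · rintro ⟨h₁, e₁⟩ ⟨h₂, e₂⟩ hx
      simp only [Subtype.mk.injEq] at hx ⊢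
      exact G'.s_inj hx
    · rintro ⟨e', he'⟩
      by_cases hr : e' ∈ Set.range G'.s
      · obtain ⟨h'', hh''⟩ := hr
        refine ⟨⟨h'', ?_⟩, by simp [hh'']⟩
        apply G.s_inj
        rw [← f.comm_s, hh'', he']
      · exact absurd ⟨h, he'.symm⟩ (hports e' hr)
  -- connectedness argument
  obtain ⟨⟨x₀⟩, hcolor⟩ := hconn
  set k : ℕ := Sum.elim NE NV x₀ with hk
  have key : ∀ x : G.E ⊕ G.V, Sum.elim NE NV x = k := by
    intro x
    have := hcolor (fun e => decide (NE e = k)) (fun v => decide (NV v = k))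
      (fun e => by simp [hinv e]) (fun h => by simp [hHV h, hEH h]) x x₀
    have hx₀ : Sum.elim (fun e => decide (NE e = k)) (fun v => decide (NV v = k)) x₀ = true := by
      cases x₀ <;> simp [hk]
    rw [hx₀] at this
    cases x with
    | inl e => simpa using this
    | inr v => simpa using this
  refine ⟨k, fun v => key (Sum.inr v), fun h => ?_, fun e => key (Sum.inl e)⟩
  show NH h = k
  rw [hHV h]
  exact key (Sum.inr (G.t h))
end

section
/- Let G be a simply connected Feynman graph and let f : G' → G be a locally injective morphism of Feynman graphs with G' connected. Then f_E, f_H and f_V are injective, and G' is simply connected. In particular, every étale morphism between connected simply connected Feynman graphs is pointwise injective. -/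
/-- A connected graph is simply connected if it admits no locally injective
cycle (a cycle being a morphism from some wheel graph). -/
def FG.SimplyConnected (G : FG) : Prop :=
  G.Connected ∧ ∀ (m : ℕ) (c : FGHom (wheelGraph m) G), ¬ c.LocInj

/-- The stick graph: two edges swapped by the involution, no half-edges, no
vertices. -/
def stickGraph : FG where
  E := Bool
  H := Empty
  V := Empty
  finE := inferInstance
  finH := inferInstance
  finV := inferInstance
  s := Empty.elim
  t := Empty.elim
  inv := fun b => !b
  s_inj := by intro a; exact a.elim
  inv_inv := Bool.not_not
  inv_ne := Bool.not_ne_self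

/-- The corolla `C_X` on a finite set `X`: edges `X ⊔ X†` (with `inl x = x`,
`inr x = x†`, swapped by the involution), half-edges `X†` attached via the
inclusion, and a single vertex. -/
def corolla (X : Type) [Finite X] : FG where
  E := X ⊕ X
  H := X
  V := Unit
  finE := inferInstance
  finH := inferInstance
  finV := inferInstance
  s := Sum.inr
  t := fun _ => ()
  inv := Sum.elim Sum.inr Sum.inl
  s_inj := fun _ _ h => by simpa using h
  inv_inv := by rintro (x | x) <;> rfl
  inv_ne := by rintro (x | x) h <;> simp at h

/-!
In a simply connected graph there is no reduced (non-backtracking) closed walk of positive length: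
if it does not backtrack at its seam either, it is a locally injective cycle; otherwise its first
and last steps cancel and a shorter such walk remains. A locally injective morphism `f` preserves
reducedness, so a reduced walk in `G'` between two vertices with the same image would map to such
a closed walk in `G`; hence `f_V` is injective, and `f_H` with it. Two edges with the same image
are handled by the same argument applied to a walk between the vertices they are attached to,
unless one of them is attached on neither side, in which case connectedness makes `G'` a stick.
Finally, `f` composed with a locally injective cycle in `G'` is a locally injective cycle in `G`.
-/

namespace FG

variable {G : FG} {n : ℕ}

/-- Step `i` leaves the vertex `v i` through the half-edge `d i` and enters `v (i + 1)`
through `a i`, the half-edge on the other side of the same edge. Only `v 0, …, v n` matter. -/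
structure Walk_s6 (G : FG) (n : ℕ) where
  v : ℕ → G.V
  d : Fin n → G.H
  a : Fin n → G.H
  t_d : ∀ i, G.t (d i) = v i
  t_a : ∀ i, G.t (a i) = v (i + 1)
  s_a : ∀ i, G.s (a i) = G.inv (G.s (d i))

namespace Walk_s6

def Reduced (w : G.Walk_s6 n) : Prop :=
  ∀ i j : Fin n, (j : ℕ) = i + 1 → w.a i ≠ w.d j

def nil (x : G.V) : G.Walk_s6 0 where
  v _ := x
  d := Fin.elim0
  a := Fin.elim0
  t_d i := i.elim0
  t_a i := i.elim0
  s_a i := i.elim0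

theorem reduced_nil (x : G.V) : (nil x).Reduced := fun i => i.elim0

def cons (d a : G.H) (hs : G.s a = G.inv (G.s d)) (w : G.Walk_s6 n) (hw : G.t a = w.v 0) :
    G.Walk_s6 (n + 1) where
  v := fun
    | 0 => G.t d
    | i + 1 => w.v i
  d := Fin.cons d w.d
  a := Fin.cons a w.a
  t_d := Fin.cases rfl fun i => by simpa using w.t_d i
  t_a := Fin.cases hw fun i => by simpa using w.t_a i
  s_a := Fin.cases hs fun i => by simpa using w.s_a i

theorem Reduced.cons {d a : G.H} {hs : G.s a = G.inv (G.s d)} {w : G.Walk_s6 n}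
    {hw : G.t a = w.v 0} (hred : w.Reduced) (hda : ∀ j : Fin n, (j : ℕ) = 0 → a ≠ w.d j) :
    (Walk_s6.cons d a hs w hw).Reduced := by
  intro i j hij
  induction j using Fin.cases with
  | zero => simp at hij
  | succ j =>
    induction i using Fin.cases with
    | zero => simpa [Walk_s6.cons] using hda j (by simpa using hij)
    | succ i => simpa [Walk_s6.cons] using hred i j (by simpa using hij)

def tail (w : G.Walk_s6 (n + 1)) : G.Walk_s6 n where
  v i := w.v (i + 1)
  d i := w.d i.succ
  a i := w.a i.succ
  t_d i := w.t_d i.succ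
  t_a i := w.t_a i.succ
  s_a i := w.s_a i.succ

theorem Reduced.tail {w : G.Walk_s6 (n + 1)} (hw : w.Reduced) : w.tail.Reduced :=
  fun i j hij => hw i.succ j.succ (by simp [hij])

def dropLast (w : G.Walk_s6 (n + 1)) : G.Walk_s6 n where
  v := w.v
  d i := w.d i.castSucc
  a i := w.a i.castSucc
  t_d i := w.t_d i.castSucc
  t_a i := w.t_a i.castSucc
  s_a i := w.s_a i.castSucc

theorem Reduced.dropLast {w : G.Walk_s6 (n + 1)} (hw : w.Reduced) : w.dropLast.Reduced :=
  fun i j hij => hw i.castSucc j.castSucc (by simp [hij])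

theorem v_sub_one_add_one {m : ℕ} (w : G.Walk_s6 (m + 1)) (hc : w.v (m + 1) = w.v 0)
    (i : Fin (m + 1)) : w.v ((i - 1 : Fin (m + 1)) + 1) = w.v i := by
  rw [Fin.coe_sub_one]
  split_ifs with h
  · simp [h, hc]
  · have := Fin.val_ne_zero_iff.mpr h
    congr 1
    omega

def toWheel {m : ℕ} (w : G.Walk_s6 (m + 1)) (hc : w.v (m + 1) = w.v 0) :
    FGHom (wheelGraph m) G where
  fH := fun p : Fin (m + 1) × Bool => if p.2 then w.d p.1 else w.a (p.1 - 1)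
  fE := fun p : Fin (m + 1) × Bool => G.s (if p.2 then w.d p.1 else w.a (p.1 - 1))
  fV := fun i : Fin (m + 1) => w.v i
  comm_inv := by
    rintro ⟨i, _ | _⟩
    · show G.s (w.d (i - 1)) = G.inv (G.s (w.a (i - 1)))
      rw [w.s_a, G.inv_inv]
    · show G.s (w.a (i + 1 - 1)) = G.inv (G.s (w.d i))
      rw [add_sub_cancel_right, w.s_a]
  comm_s _ := rfl
  comm_t := by
    rintro ⟨i, _ | _⟩
    · exact (w.t_a _).trans (w.v_sub_one_add_one hc i) |>.symm
    · exact (w.t_d i).symm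

theorem toWheel_locInj {m : ℕ} {w : G.Walk_s6 (m + 1)} (hc : w.v (m + 1) = w.v 0)
    (hw : w.Reduced) (hseam : w.a (Fin.last m) ≠ w.d 0) : (w.toWheel hc).LocInj := by
  have hcyc : ∀ i : Fin (m + 1), w.a (i - 1) ≠ w.d i := by
    intro i
    by_cases h : i = 0
    · have : (0 : Fin (m + 1)) - 1 = Fin.last m :=
        Fin.ext (by rw [Fin.coe_sub_one, if_pos rfl, Fin.val_last])
      rwa [h, this]
    · refine hw _ _ ?_
      have := Fin.val_ne_zero_iff.mpr h
      rw [Fin.coe_sub_one, if_neg h]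
      omega
  rintro ⟨i, _ | _⟩ ⟨j, _ | _⟩ (rfl : i = j) heq
  · rfl
  · exact absurd heq (hcyc i)
  · exact absurd heq.symm (hcyc i)
  · rfl

end Walk_s6

theorem SimplyConnected.eq_zero_of_reduced_closed (hG : G.SimplyConnected) (w : G.Walk_s6 n)
    (hw : w.Reduced) (hc : w.v n = w.v 0) : n = 0 := by
  induction n using Nat.strong_induction_on with
  | _ n ih =>
  obtain _ | m := n
  · rfl
  exfalso
  by_cases hseam : w.a (Fin.last m) = w.d 0
  swap
  · exact hG.2 m (w.toWheel hc) (Walk_s6.toWheel_locInj hc hw hseam)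
  -- the walk leaves and returns through the same half-edge, so its first and last steps cancel
  have hback : w.d (Fin.last m) = w.a 0 := G.s_inj <| by
    rw [w.s_a, ← hseam, w.s_a, G.inv_inv]
  obtain _ | _ | k := m
  · exact G.inv_ne _ (by rw [← w.s_a]; exact congrArg G.s hseam)
  · exact hw 0 1 rfl hback.symm
  · refine k.succ_ne_zero (ih (k + 1) (by omega) w.tail.dropLast hw.tail.dropLast ?_)
    exact (w.t_d (Fin.last _)).symm.trans ((congrArg G.t hback).trans (w.t_a 0))

theorem Connected.mem_of_step_closed (hG : G.Connected) {S : Set G.V} {x : G.V} (hx : x ∈ S)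
    (hS : ∀ d a, G.s a = G.inv (G.s d) → G.t a ∈ S → G.t d ∈ S) (y : G.V) : y ∈ S := by
  classical
  have hcol := hG.2
    (fun e => decide (∃ h, (G.s h = e ∨ G.s h = G.inv e) ∧ G.t h ∈ S))
    (fun v => decide (v ∈ S))
    (fun e => by simp only [G.inv_inv, or_comm])
    (fun h => by
      refine decide_eq_decide.mpr ⟨fun hh => ⟨h, .inl rfl, hh⟩, ?_⟩
      rintro ⟨h', hs | hs, hh⟩
      · rwa [← G.s_inj hs]
      · exact hS h h' hs hh)
    (Sum.inr x) (Sum.inr y)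
  simpa [hx] using hcol

theorem Connected.exists_reduced_walk (hG : G.Connected) (x y : G.V) :
    ∃ n, ∃ w : G.Walk_s6 n, w.Reduced ∧ w.v 0 = x ∧ w.v n = y := by
  refine hG.mem_of_step_closed
    (S := {u | ∃ n, ∃ w : G.Walk_s6 n, w.Reduced ∧ w.v 0 = u ∧ w.v n = y})
    ⟨0, .nil y, Walk_s6.reduced_nil y, rfl, rfl⟩ ?_ x
  rintro d a hs ⟨n, w, hw, hwa, rfl⟩
  obtain _ | n := n
  · exact ⟨1, w.cons d a hs hwa.symm, hw.cons fun j => j.elim0, rfl, rfl⟩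
  by_cases hback : w.d 0 = a
  · -- the new step would be retraced at once, so drop the first step of `w` instead
    have hda : w.a 0 = d := G.s_inj <| by rw [w.s_a, hback, hs, G.inv_inv]
    exact ⟨n, w.tail, hw.tail, by rw [← hda]; exact (w.t_a 0).symm, rfl⟩
  · refine ⟨n + 2, w.cons d a hs hwa.symm, hw.cons ?_, rfl, rfl⟩
    intro j hj hj'
    exact hback ((congrArg w.d (Fin.ext hj)).symm.trans hj'.symm)

theorem Connected.eq_or_eq_inv_of_isPort (hG : G.Connected) {e : G.E}
    (he : G.IsPort e) (he' : G.IsPort (G.inv e)) (e' : G.E) :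
    e' = e ∨ e' = G.inv e := by
  classical
  have hcol := hG.2 (fun e' => decide (e' = e ∨ e' = G.inv e)) (fun _ => false)
    (fun e' => by
      refine decide_eq_decide.mpr ⟨?_, ?_⟩ <;> rintro (h | h)
      · exact .inr (by rw [← h, G.inv_inv])
      · exact .inl (G.inv_inv e' ▸ h ▸ G.inv_inv e)
      · exact .inr (by rw [h])
      · exact .inl (by rw [h, G.inv_inv]))
    (fun h => by
      refine (decide_eq_false ?_).symm
      rintro (hh | hh)
      · exact he ⟨h, hh⟩
      · exact he' ⟨h, hh⟩)
    (Sum.inl e') (Sum.inl e)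
  simpa using hcol

end FG

namespace FGHom
variable {G' G : FG} {f : FGHom G' G} {n : ℕ}

def mapWalk (f : FGHom G' G) (w : G'.Walk_s6 n) : G.Walk_s6 n where
  v i := f.fV (w.v i)
  d i := f.fH (w.d i)
  a i := f.fH (w.a i)
  t_d i := by rw [← f.comm_t, w.t_d]
  t_a i := by rw [← f.comm_t, w.t_a]
  s_a i := by rw [← f.comm_s, ← f.comm_s, w.s_a, f.comm_inv]

theorem eq_of_fE_eq_of_isPort (hG' : G'.Connected) {e e' : G'.E} (he : f.fE e = f.fE e')
    (hp : G'.IsPort e) (hp' : G'.IsPort (G'.inv e)) : e = e' := by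
  refine ((hG'.eq_or_eq_inv_of_isPort hp hp' e').resolve_right fun h => ?_).symm
  exact G.inv_ne (f.fE e) (by rw [← f.comm_inv, ← h, he])

theorem LocInj.comp {G'' : FG} {g : FGHom G G''} (hg : g.LocInj) (hf : f.LocInj) :
    (g.comp f).LocInj := fun h₁ h₂ ht hgf =>
  hf h₁ h₂ ht (hg _ _ (by rw [← f.comm_t, ← f.comm_t, ht]) hgf)

theorem LocInj.reduced_mapWalk (hf : f.LocInj) {w : G'.Walk_s6 n} (hw : w.Reduced) :
    (f.mapWalk w).Reduced :=
  fun i j hij h => hw i j hij (hf _ _ (by rw [w.t_a, w.t_d, hij]) h)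

section SimplyConnected

variable (hf : f.LocInj) (hG : G.SimplyConnected) (hG' : G'.Connected)
include hf hG hG'

theorem LocInj.injective_fV : Function.Injective f.fV := by
  intro x y hxy
  obtain ⟨n, w, hw, rfl, rfl⟩ := hG'.exists_reduced_walk x y
  obtain rfl : n = 0 :=
    hG.eq_zero_of_reduced_closed (f.mapWalk w) (hf.reduced_mapWalk hw) hxy.symm
  rfl

theorem LocInj.injective_fH : Function.Injective f.fH := fun h₁ h₂ heq =>
  hf h₁ h₂ (hf.injective_fV hG hG' (by rw [f.comm_t, f.comm_t, heq])) heq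

theorem LocInj.eq_of_mem_range {e₁ e₂ : G'.E} (h₁ : e₁ ∈ Set.range G'.s)
    (h₂ : e₂ ∈ Set.range G'.s) (he : f.fE e₁ = f.fE e₂) : e₁ = e₂ := by
  obtain ⟨h₁, rfl⟩ := h₁
  obtain ⟨h₂, rfl⟩ := h₂
  exact congrArg G'.s (hf.injective_fH hG hG' (G.s_inj (by rw [← f.comm_s, ← f.comm_s, he])))

/-- If `inv e₁` were a port, a reduced walk between the vertices carrying `e₁` and `inv e₂`,
closed up in `G` by the edge `f e₁ = f e₂`, would be a reduced closed walk of positive length. -/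
theorem LocInj.inv_mem_range_of_fE_eq {e₁ e₂ : G'.E} (h₁ : e₁ ∈ Set.range G'.s)
    (h₂ : G'.inv e₂ ∈ Set.range G'.s) (he : f.fE e₁ = f.fE e₂) :
    G'.inv e₁ ∈ Set.range G'.s := by
  obtain ⟨h₁, rfl⟩ := h₁
  obtain ⟨h₂, hh₂⟩ := h₂
  by_contra hpend
  obtain ⟨n, w, hw, hw0, hwn⟩ := hG'.exists_reduced_walk (G'.t h₁) (G'.t h₂)
  have hs : G.s (f.fH h₁) = G.inv (G.s (f.fH h₂)) := by
    rw [← f.comm_s, he, ← f.comm_s, hh₂, f.comm_inv, G.inv_inv]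
  have hjoin : G.t (f.fH h₁) = (f.mapWalk w).v 0 := by rw [← f.comm_t, ← hw0]; rfl
  have hred : ((f.mapWalk w).cons _ _ hs hjoin).Reduced := by
    refine (hf.reduced_mapWalk hw).cons fun j hj heq => hpend ⟨w.a j, ?_⟩
    have hd : h₁ = w.d j := hf _ _ (by rw [w.t_d, hj, hw0]) heq
    rw [w.s_a, ← hd]
  have hclosed : ((f.mapWalk w).cons _ _ hs hjoin).v (n + 1) = G.t (f.fH h₂) := by
    show f.fV (w.v n) = _
    rw [hwn, f.comm_t]
  exact absurd (hG.eq_zero_of_reduced_closed _ hred hclosed) n.succ_ne_zero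

theorem LocInj.injective_fE : Function.Injective f.fE := by
  intro e₁ e₂ he
  have of_inv_mem_range (h₁ : G'.inv e₁ ∈ Set.range G'.s) (h₂ : G'.inv e₂ ∈ Set.range G'.s) :
      e₁ = e₂ :=
    Function.Involutive.injective G'.inv_inv <|
      hf.eq_of_mem_range hG hG' h₁ h₂ (by rw [f.comm_inv, f.comm_inv, he])
  by_cases hp₁ : G'.IsPort e₁ ∧ G'.IsPort (G'.inv e₁)
  · exact f.eq_of_fE_eq_of_isPort hG' he hp₁.1 hp₁.2
  by_cases hp₂ : G'.IsPort e₂ ∧ G'.IsPort (G'.inv e₂)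
  · exact (f.eq_of_fE_eq_of_isPort hG' he.symm hp₂.1 hp₂.2).symm
  simp only [FG.IsPort, not_and_or, not_not] at hp₁ hp₂
  rcases hp₁ with h₁ | h₁ <;> rcases hp₂ with h₂ | h₂
  · exact hf.eq_of_mem_range hG hG' h₁ h₂ he
  · exact of_inv_mem_range (hf.inv_mem_range_of_fE_eq hG hG' h₁ h₂ he) h₂
  · exact of_inv_mem_range h₁ (hf.inv_mem_range_of_fE_eq hG hG' h₂ h₁ he.symm)
  · exact of_inv_mem_range h₁ h₂

theorem LocInj.injective :
    Function.Injective f.fE ∧ Function.Injective f.fH ∧ Function.Injective f.fV :=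
  ⟨hf.injective_fE hG hG', hf.injective_fH hG hG', hf.injective_fV hG hG'⟩

theorem LocInj.simplyConnected : G'.SimplyConnected :=
  ⟨hG', fun m c hc => hG.2 m (f.comp c) (hf.comp hc)⟩

end SimplyConnected

end FGHom

/-- A locally injective morphism from a connected Feynman graph into a simply
connected Feynman graph is pointwise injective, and its source is simply
connected.  In particular, every étale morphism between connected simply
connected Feynman graphs is pointwise injective. -/
theorem locallyInjective_into_simplyConnected
    (G' G : FG) (f : FGHom G' G) (hsc : G.SimplyConnected)
    (hconn' : G'.Connected) (hli : f.LocInj) :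
    (Function.Injective f.fE ∧ Function.Injective f.fH ∧
      Function.Injective f.fV) ∧
    G'.SimplyConnected ∧
    (∀ (K' K : FG) (g : FGHom K' K), K'.SimplyConnected → K.SimplyConnected →
      g.Etale →
      Function.Injective g.fE ∧ Function.Injective g.fH ∧
        Function.Injective g.fV) :=
  ⟨hli.injective hsc hconn', hli.simplyConnected hsc hconn',
    fun _ _ _ hK' hK hg => hg.1.injective hK hK'.1⟩
end

section
/- Let G be a Feynman graph with no stick components, I a finite set, and a, b : I → E maps such that: (i) the 2|I| edges a(i), τa(i) (i ∈ I) are pairwise distinct, and likewise the 2|I| edges b(i), τb(i) are pairwise distinct; (ii) the sets {a(i), τa(i) : i ∈ I} and {b(i), τb(i) : i ∈ I} are disjoint; (iii) for every i ∈ I, a(i) and τb(i) are ports of G. Let ~ be the equivalence relation on E generated by a(i) ~ b(i) and τa(i) ~ τb(i) for all i ∈ I, and q : E → E/~ the quotient map. Then τ descends to a fixed-point-free involution τ̄ on E/~ and q ∘ s : H → E/~ is injective, so Ḡ = (E/~, H, V, q ∘ s, t, τ̄) is a Feynman graph; the triple p = (q, id_H, id_V) : G → Ḡ is an étale morphism;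 and p is the coequaliser of the gluing datum: for every Feynman graph K and every morphism g : G → K with g_E(a(i)) = g_E(b(i)) for all i ∈ I, there is a unique morphism ḡ : Ḡ → K with ḡ ∘ p = g. -/
/-- The relation generating the gluing: `a i ~ b i` and `inv (a i) ~ inv (b i)`. -/
def glueRel (G : FG) {I : Type} (a b : I → G.E) : G.E → G.E → Prop :=
  fun x y => ∃ i, (x = a i ∧ y = b i) ∨ (x = G.inv (a i) ∧ y = G.inv (b i))

/-- Explicit description of the equivalence closure of `glueRel`. -/
def Req (G : FG) {I : Type} (a b : I → G.E) (x y : G.E) : Prop :=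
  x = y ∨ ∃ i, (x = a i ∧ y = b i) ∨ (x = b i ∧ y = a i) ∨
    (x = G.inv (a i) ∧ y = G.inv (b i)) ∨ (x = G.inv (b i) ∧ y = G.inv (a i))

/-- The quotient Feynman graph of a gluing datum. -/
def glueQuot (G : FG) {I : Type} (a b : I → G.E)
    (invlift : ∀ x y : G.E, glueRel G a b x y →
      Quot.mk (glueRel G a b) (G.inv x) = Quot.mk (glueRel G a b) (G.inv y))
    (sinj : Function.Injective fun h => Quot.mk (glueRel G a b) (G.s h))
    (hii : ∀ q : Quot (glueRel G a b),
      Quot.lift (fun e => Quot.mk (glueRel G a b) (G.inv e)) invlift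
        (Quot.lift (fun e => Quot.mk (glueRel G a b) (G.inv e)) invlift q) = q)
    (hne : ∀ q : Quot (glueRel G a b),
      Quot.lift (fun e => Quot.mk (glueRel G a b) (G.inv e)) invlift q ≠ q) : FG where
  E := Quot (glueRel G a b)
  H := G.H
  V := G.V
  finE := Finite.of_surjective (Quot.mk _) (fun q => Quot.exists_rep q)
  finH := G.finH
  finV := G.finV
  s := fun h => Quot.mk _ (G.s h)
  t := G.t
  inv := Quot.lift (fun e => Quot.mk _ (G.inv e)) invlift
  s_inj := sinj
  inv_inv := hii
  inv_ne := hne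

/-- Coequalisers of gluing data.  Given a graph `G` with no stick components
and gluing data `a, b : I → E` (the edges `a i, inv (a i)` pairwise distinct,
likewise for `b`, the two families disjoint, and `a i`, `inv (b i)` ports),
the involution descends to a fixed-point-free involution on the quotient of
`E` by the equivalence relation generated by `glueRel` (clauses 1 and 2),
the composite of the quotient map with `s` is injective (clause 3), and there
is a quotient Feynman graph `Gbar` — with edge set the quotient of `E` and the
same half-edges and vertices — such that the quotient morphism `p : G → Gbar`
is étale and is the coequaliser of the gluing datum. -/

theorem gluing_coequaliser (G : FG)
    (hstick : ∀ e : G.E, ¬(G.IsPort e ∧ G.IsPort (G.inv e)))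
    (I : Type) [Finite I] (a b : I → G.E)
    (ha : Function.Injective fun p : I × Bool =>
      if p.2 then G.inv (a p.1) else a p.1)
    (hb : Function.Injective fun p : I × Bool =>
      if p.2 then G.inv (b p.1) else b p.1)
    (hdisj : ∀ i j : I, a i ≠ b j ∧ a i ≠ G.inv (b j) ∧
      G.inv (a i) ≠ b j ∧ G.inv (a i) ≠ G.inv (b j))
    (hports : ∀ i : I, G.IsPort (a i) ∧ G.IsPort (G.inv (b i))) :
    (∀ x y : G.E, Relation.EqvGen (glueRel G a b) x y →
      Relation.EqvGen (glueRel G a b) (G.inv x) (G.inv y)) ∧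
    (∀ e : G.E, ¬ Relation.EqvGen (glueRel G a b) (G.inv e) e) ∧
    (∀ h h' : G.H, Relation.EqvGen (glueRel G a b) (G.s h) (G.s h') → h = h') ∧
    ∃ (Gbar : FG) (p : FGHom G Gbar),
      p.Etale ∧
      Function.Surjective p.fE ∧
      (∀ e e' : G.E, p.fE e = p.fE e' ↔ Relation.EqvGen (glueRel G a b) e e') ∧
      Function.Bijective p.fH ∧
      Function.Bijective p.fV ∧
      ∀ (K : FG) (g : FGHom G K), (∀ i : I, g.fE (a i) = g.fE (b i)) →
        ∃! gbar : FGHom Gbar K, gbar.comp p = g := by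
  -- injectivity / distinctness facts
  have hinv : Function.Injective G.inv := fun x y h => by
    rw [← G.inv_inv x, h, G.inv_inv]
  have haa : ∀ i j, a i = a j → i = j := fun i j h => by
    have := @ha (i, false) (j, false) (by simpa using h)
    simpa using congrArg Prod.fst this
  have hbb : ∀ i j, b i = b j → i = j := fun i j h => by
    have := @hb (i, false) (j, false) (by simpa using h)
    simpa using congrArg Prod.fst this
  have hana : ∀ i j, a i ≠ G.inv (a j) := fun i j h => by
    have := @ha (i, false) (j, true) (by simpa using h)
    simp at this
  have hbnb : ∀ i j, b i ≠ G.inv (b j) := fun i j h => by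
    have := @hb (i, false) (j, true) (by simpa using h)
    simp at this
  -- Req is transitive and symmetric
  have rtrans : ∀ x y z : G.E, Req G a b x y → Req G a b y z → Req G a b x z := by
    rintro x y z (rfl | ⟨i, h1⟩) h2
    · exact h2
    rcases h2 with rfl | ⟨j, h2⟩
    · exact Or.inr ⟨i, h1⟩
    rcases h1 with ⟨rfl, rfl⟩ | ⟨rfl, rfl⟩ | ⟨rfl, rfl⟩ | ⟨rfl, rfl⟩ <;>
      rcases h2 with ⟨h2, rfl⟩ | ⟨h2, rfl⟩ | ⟨h2, rfl⟩ | ⟨h2, rfl⟩ <;> left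
    · exact absurd h2.symm (hdisj j i).1
    · rw [hbb i j h2]
    · exact absurd h2.symm (hdisj j i).2.2.1
    · exact absurd h2 (hbnb i j)
    · rw [haa i j h2]
    · exact absurd h2 (hdisj i j).1
    · exact absurd h2 (hana i j)
    · exact absurd h2 (hdisj i j).2.1
    · exact absurd h2.symm (hdisj j i).2.1
    · exact absurd h2.symm (hbnb j i)
    · exact absurd h2.symm (hdisj j i).2.2.2
    · rw [hbb i j (hinv h2)]
    · exact absurd h2.symm (hana j i)
    · exact absurd h2 (hdisj i j).2.2.1
    · rw [haa i j (hinv h2)]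
    · exact absurd h2 (hdisj i j).2.2.2
  have rsymm : ∀ x y : G.E, Req G a b x y → Req G a b y x := by
    rintro x y (rfl | ⟨i, h⟩)
    · exact Or.inl rfl
    · exact Or.inr ⟨i, by tauto⟩
  -- Req characterises the equivalence closure
  have hchar : ∀ x y : G.E, Relation.EqvGen (glueRel G a b) x y ↔ Req G a b x y := by
    intro x y
    constructor
    · intro h
      induction h with
      | rel x y h =>
        rcases h with ⟨i, ⟨rfl, rfl⟩ | ⟨rfl, rfl⟩⟩
        · exact Or.inr ⟨i, Or.inl ⟨rfl, rfl⟩⟩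
        · exact Or.inr ⟨i, Or.inr (Or.inr (Or.inl ⟨rfl, rfl⟩))⟩
      | refl x => exact Or.inl rfl
      | symm x y _ ih => exact rsymm x y ih
      | trans x y z _ _ ih1 ih2 => exact rtrans x y z ih1 ih2
    · rintro (rfl | ⟨i, ⟨rfl, rfl⟩ | ⟨rfl, rfl⟩ | ⟨rfl, rfl⟩ | ⟨rfl, rfl⟩⟩)
      · exact Relation.EqvGen.refl x
      · exact Relation.EqvGen.rel _ _ ⟨i, Or.inl ⟨rfl, rfl⟩⟩
      · exact Relation.EqvGen.symm _ _ (Relation.EqvGen.rel _ _ ⟨i, Or.inl ⟨rfl, rfl⟩⟩)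
      · exact Relation.EqvGen.rel _ _ ⟨i, Or.inr ⟨rfl, rfl⟩⟩
      · exact Relation.EqvGen.symm _ _ (Relation.EqvGen.rel _ _ ⟨i, Or.inr ⟨rfl, rfl⟩⟩)
  -- clause 1
  have clause1 : ∀ x y : G.E, Relation.EqvGen (glueRel G a b) x y →
      Relation.EqvGen (glueRel G a b) (G.inv x) (G.inv y) := by
    intro x y h
    induction h with
    | rel x y h =>
      rcases h with ⟨i, ⟨rfl, rfl⟩ | ⟨rfl, rfl⟩⟩
      · exact Relation.EqvGen.rel _ _ ⟨i, Or.inr ⟨rfl, rfl⟩⟩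
      · exact Relation.EqvGen.rel _ _ ⟨i, Or.inl ⟨G.inv_inv _, G.inv_inv _⟩⟩
    | refl x => exact Relation.EqvGen.refl _
    | symm x y _ ih => exact Relation.EqvGen.symm _ _ ih
    | trans x y z _ _ ih1 ih2 => exact Relation.EqvGen.trans _ _ _ ih1 ih2
  -- clause 2
  have clause2 : ∀ e : G.E, ¬ Relation.EqvGen (glueRel G a b) (G.inv e) e := by
    intro e h
    rcases (hchar _ _).mp h with h' | ⟨i, ⟨h1, rfl⟩ | ⟨h1, rfl⟩ | ⟨h1, rfl⟩ | ⟨h1, rfl⟩⟩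
    · exact G.inv_ne e h'
    · exact (hdisj i i).2.1 h1.symm
    · exact (hdisj i i).2.2.1 h1
    · exact (hdisj i i).2.1 (hinv h1).symm
    · exact (hdisj i i).2.2.1 (hinv h1)
  -- clause 3
  have clause3 : ∀ h h' : G.H, Relation.EqvGen (glueRel G a b) (G.s h) (G.s h') → h = h' := by
    intro h h' hh
    rcases (hchar _ _).mp hh with h' | ⟨i, ⟨h1, h2⟩ | ⟨h1, h2⟩ | ⟨h1, h2⟩ | ⟨h1, h2⟩⟩
    · exact G.s_inj h'
    · exact absurd ⟨h, h1⟩ (hports i).1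
    · exact absurd ⟨h', h2⟩ (hports i).1
    · exact absurd ⟨h', h2⟩ (hports i).2
    · exact absurd ⟨h, h1⟩ (hports i).2
  refine ⟨clause1, clause2, clause3, ?_⟩
  -- the quotient graph
  have invlift : ∀ x y : G.E, glueRel G a b x y →
      Quot.mk (glueRel G a b) (G.inv x) = Quot.mk (glueRel G a b) (G.inv y) := by
    rintro x y ⟨i, ⟨rfl, rfl⟩ | ⟨rfl, rfl⟩⟩
    · exact Quot.sound ⟨i, Or.inr ⟨rfl, rfl⟩⟩
    · exact Quot.sound ⟨i, Or.inl ⟨G.inv_inv _, G.inv_inv _⟩⟩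
  have sinj : Function.Injective fun h => Quot.mk (glueRel G a b) (G.s h) :=
    fun h h' hq => clause3 h h' (Quot.eqvGen_exact hq)
  have hii : ∀ q : Quot (glueRel G a b),
      Quot.lift (fun e => Quot.mk (glueRel G a b) (G.inv e)) invlift
        (Quot.lift (fun e => Quot.mk (glueRel G a b) (G.inv e)) invlift q) = q :=
    Quot.ind (fun e => congrArg (Quot.mk (glueRel G a b)) (G.inv_inv e))
  have hne : ∀ q : Quot (glueRel G a b),
      Quot.lift (fun e => Quot.mk (glueRel G a b) (G.inv e)) invlift q ≠ q :=
    Quot.ind (fun e h => clause2 e (Quot.eqvGen_exact h))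
  refine ⟨glueQuot G a b invlift sinj hii hne,
    ⟨Quot.mk _, id, id, fun e => rfl, fun h => rfl, fun h => rfl⟩,
    ⟨fun h1 h2 _ hh => hh, fun v h' ht => ⟨h', ht, rfl⟩⟩,
    fun q => Quot.exists_rep q,
    fun e e' => ⟨Quot.eqvGen_exact, Quot.eqvGen_sound⟩,
    Function.bijective_id, Function.bijective_id, ?_⟩
  -- coequaliser property
  intro K g hg
  have hg' : ∀ x y : G.E, glueRel G a b x y → g.fE x = g.fE y := by
    rintro x y ⟨i, ⟨rfl, rfl⟩ | ⟨rfl, rfl⟩⟩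
    · exact hg i
    · rw [g.comm_inv, g.comm_inv, hg i]
  refine ⟨⟨Quot.lift g.fE hg', g.fH, g.fV, ?_, fun h => g.comm_s h, fun h => g.comm_t h⟩,
    FGHom.ext' (funext fun e => rfl) rfl rfl, ?_⟩
  · intro q
    induction q using Quot.ind with
    | _ e =>
      have hred : (glueQuot G a b invlift sinj hii hne).inv (Quot.mk (glueRel G a b) e) =
          Quot.mk (glueRel G a b) (G.inv e) := rfl
      rw [hred]
      exact g.comm_inv e
  · intro gbar' hgbar'
    have hE := congrArg FGHom.fE hgbar'
    have hH := congrArg FGHom.fH hgbar'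
    have hV := congrArg FGHom.fV hgbar'
    refine FGHom.ext' ?_ hH hV
    funext q
    induction q using Quot.ind with
    | _ e => exact congrFun hE e
end

section
/- Every connected Feynman graph with no inner edges is isomorphic either to the stick graph (the Feynman graph with two edges swapped by τ, no half-edges and no vertices) or to a corolla C_X for some finite set X. -/
/-!
Connectedness, tested against colourings, is an induction principle: a property of edges and
vertices that is invariant under `inv` and transported along half-edges holds everywhere as soon
as it holds somewhere. Without a vertex this confines all edges to one pair `{e, inv e}`, giving
the stick. With a vertex `v`, the set of vertices reachable from `v` through a single half-edge and
its partner edge is closed, because no edge is inner, so `v` is the only vertex; and every edge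
is `s h` or `inv (s h)`. In both cases the evident morphism from the stick, resp. from the
corolla on `H`, is an isomorphism, and isomorphisms can be inverted.
-/

theorem FG.Connected.forall_of_compatible {G : FG} (hG : G.Connected) (P : G.E → Prop)
    (Q : G.V → Prop) (hP : ∀ e, P (G.inv e) ↔ P e) (hPQ : ∀ h, Q (G.t h) ↔ P (G.s h))
    {x : G.E ⊕ G.V} (hx : Sum.elim P Q x) (y : G.E ⊕ G.V) : Sum.elim P Q y := by
  classical
  have hcol := hG.2 (fun e => decide (P e)) (fun v => decide (Q v))
    (fun e => decide_eq_decide.2 (hP e)) (fun h => decide_eq_decide.2 (hPQ h)) x y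
  rcases x with x | x <;> rcases y with y | y <;> simp_all

theorem FG.Connected.edge_eq_or_eq_inv {G : FG} (hG : G.Connected) [IsEmpty G.V]
    (e₀ e : G.E) : e = e₀ ∨ e = G.inv e₀ := by
  refine hG.forall_of_compatible (fun e => e = e₀ ∨ e = G.inv e₀) isEmptyElim
    (fun e' => ?_) (fun h => isEmptyElim (G.t h)) (x := .inl e₀) (Or.inl rfl) (.inl e)
  constructor
  · rintro (he | he)
    · exact Or.inr (by rw [← he, G.inv_inv])
    · exact Or.inl (by rw [← G.inv_inv e', he, G.inv_inv])
  · rintro (rfl | rfl)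
    · exact Or.inr rfl
    · exact Or.inl (G.inv_inv e₀)

theorem FG.Connected.mem_range_s_or_inv_mem_range_s {G : FG} (hG : G.Connected) (v : G.V)
    (e : G.E) : e ∈ Set.range G.s ∨ G.inv e ∈ Set.range G.s := by
  refine hG.forall_of_compatible (fun e => e ∈ Set.range G.s ∨ G.inv e ∈ Set.range G.s)
    (fun _ => True) (fun e => ?_) (fun h => ?_) (x := .inr v) trivial (.inl e)
  · rw [G.inv_inv, or_comm]
  · exact iff_of_true trivial (Or.inl ⟨h, rfl⟩)

theorem FG.Connected.subsingleton_V {G : FG} (hG : G.Connected)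
    (hno : ∀ e, ¬ G.IsInner e) : Subsingleton G.V := by
  refine ⟨fun v₀ v => ?_⟩
  have hall := hG.forall_of_compatible
    (fun e => ∃ h, (G.s h = e ∨ G.s h = G.inv e) ∧ G.t h = v₀) (· = v₀)
    (fun e => ?_) (fun h => ?_) (x := .inr v₀) rfl (.inr v)
  · exact (hall : v = v₀).symm
  · simp only [G.inv_inv, or_comm]
  · refine ⟨fun ht => ⟨h, Or.inl rfl, ht⟩, ?_⟩
    rintro ⟨h', hs | hs, ht⟩
    · rwa [G.s_inj hs] at ht
    -- `s h` and `inv (s h)` both in the range of `s` would make `s h` inner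
    · exact (hno (G.s h) ⟨⟨h, rfl⟩, ⟨h', hs⟩⟩).elim

theorem FGHom.IsIso.exists_isIso_symm {G G' : FG} {f : FGHom G G'} (hf : f.IsIso) :
    ∃ g : FGHom G' G, g.IsIso := by
  let eE := Equiv.ofBijective f.fE hf.1
  let eH := Equiv.ofBijective f.fH hf.2.1
  let eV := Equiv.ofBijective f.fV hf.2.2
  refine ⟨⟨eE.symm, eH.symm, eV.symm, fun e => ?_, fun h => ?_, fun h => ?_⟩,
    eE.symm.bijective, eH.symm.bijective, eV.symm.bijective⟩
  · apply eE.injective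
    rw [eE.apply_symm_apply]
    exact (congrArg G'.inv (eE.apply_symm_apply e)).symm.trans (f.comm_inv _).symm
  · apply eE.injective
    rw [eE.apply_symm_apply]
    exact (congrArg G'.s (eH.apply_symm_apply h)).symm.trans (f.comm_s _).symm
  · apply eV.injective
    rw [eV.apply_symm_apply]
    exact (congrArg G'.t (eH.apply_symm_apply h)).symm.trans (f.comm_t _).symm

def stickGraph.hom (G : FG) (e : G.E) : FGHom stickGraph G where
  fE b := bif b then G.inv e else e
  fH := Empty.elim
  fV := Empty.elim
  comm_inv b := by cases b <;> simp [stickGraph, G.inv_inv]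
  comm_s h := h.elim
  comm_t h := h.elim

theorem stickGraph.hom_isIso {G : FG} [IsEmpty G.V] (e : G.E)
    (he : ∀ e', e' = e ∨ e' = G.inv e) : (stickGraph.hom G e).IsIso := by
  have : IsEmpty G.H := ⟨fun h => isEmptyElim (G.t h)⟩
  refine ⟨⟨fun b b' hbb' => ?_, fun e' => ?_⟩, ⟨fun x => x.elim, isEmptyElim⟩,
    ⟨fun x => x.elim, isEmptyElim⟩⟩
  · have hne := G.inv_ne e
    cases b <;> cases b' <;> simp only [stickGraph.hom, cond_true, cond_false] at hbb'
    exacts [rfl, (hne hbb'.symm).elim, (hne hbb').elim, rfl]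
  · rcases he e' with rfl | rfl
    exacts [⟨false, rfl⟩, ⟨true, rfl⟩]

/-- The morphism sending `x†` to `s x` and `x` to `inv (s x)`. -/
def corolla.hom (G : FG) [Subsingleton G.V] (v : G.V) : FGHom (corolla G.H) G where
  fE := Sum.elim (G.inv ∘ G.s) G.s
  fH := id
  fV _ := v
  comm_inv := by rintro (h | h) <;> simp [corolla, G.inv_inv]
  comm_s _ := rfl
  comm_t _ := Subsingleton.elim _ _

theorem corolla.hom_isIso {G : FG} [Subsingleton G.V] (v : G.V) (hno : ∀ e, ¬ G.IsInner e)
    (hE : ∀ e, e ∈ Set.range G.s ∨ G.inv e ∈ Set.range G.s) : (corolla.hom G v).IsIso := by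
  refine ⟨⟨?_, fun e => ?_⟩, Function.bijective_id,
    ⟨fun _ _ _ => rfl, fun _ => ⟨(), Subsingleton.elim _ _⟩⟩⟩
  · exact ((Function.Involutive.injective G.inv_inv).comp G.s_inj).sumElim G.s_inj
      fun h h' hs => hno (G.s h) ⟨⟨h, rfl⟩, ⟨h', hs.symm⟩⟩
  · rcases hE e with ⟨h, rfl⟩ | ⟨h, hs⟩
    · exact ⟨.inr h, rfl⟩
    · exact ⟨.inl h, by simp [corolla.hom, hs, G.inv_inv]⟩

/-- Every connected Feynman graph with no inner edges is isomorphic either to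
the stick graph or to a corolla `C_X` on some finite set `X`. -/
theorem connected_no_inner_edges_classification (G : FG) (hconn : G.Connected)
    (hnoinner : ∀ e : G.E, ¬ G.IsInner e) :
    (∃ f : FGHom G stickGraph, f.IsIso) ∨
    (∃ (X : Type) (hX : Finite X) (f : FGHom G (@corolla X hX)), f.IsIso) := by
  rcases isEmpty_or_nonempty G.V with hV | ⟨⟨v⟩⟩
  · obtain ⟨e⟩ : Nonempty G.E := by
      obtain ⟨e | w⟩ := hconn.1
      exacts [⟨e⟩, isEmptyElim w]
    exact .inl (stickGraph.hom_isIso e (hconn.edge_eq_or_eq_inv e)).exists_isIso_symm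
  · have := hconn.subsingleton_V hnoinner
    exact .inr ⟨G.H, G.finH,
      (corolla.hom_isIso v hnoinner (hconn.mem_range_s_or_inv_mem_range_s v)).exists_isIso_symm⟩
end

section
/- A Feynman graph G has an inner edge if and only if there exists a morphism of Feynman graphs W^2 → G from the wheel graph with two vertices. -/
/-- A Feynman graph has an inner edge if and only if it admits a morphism from
the wheel graph with two vertices (`wheelGraph 1 = W^2`). -/
theorem inner_edge_iff_hom_from_wheel_two (G : FG) :
    (∃ e : G.E, G.IsInner e) ↔ Nonempty (FGHom (wheelGraph 1) G) := by
  constructor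
  · rintro ⟨e, ⟨h₁, hs₁⟩, ⟨h₂, hs₂⟩⟩
    refine ⟨{
      fE := (fun p : Fin 2 × Bool => if p.1 = 0 then e else G.inv e)
      fH := (fun p : Fin 2 × Bool => if p.1 = 0 then h₁ else h₂)
      fV := (fun i : Fin 2 => if i = 0 then G.t h₁ else G.t h₂)
      comm_inv := ?_
      comm_s := ?_
      comm_t := ?_ }⟩
    · rintro ⟨i, b⟩
      fin_cases i <;> cases b <;>
        simp [wheelGraph, G.inv_inv]
    · rintro ⟨i, b⟩
      fin_cases i <;> cases b <;> simp [wheelGraph, hs₁, hs₂]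
    · rintro ⟨i, b⟩
      fin_cases i <;> cases b <;> simp [wheelGraph]
  · rintro ⟨f⟩
    refine ⟨f.fE (0, true), ⟨f.fH (0, true), ?_⟩, ⟨f.fH (1, false), ?_⟩⟩
    · exact (f.comm_s (0, true)).symm
    · have h1 := f.comm_inv (0, true)
      have h2 := f.comm_s (1, false)
      have hi : (wheelGraph 1).inv (0, true) = ((1 : Fin 2), false) := rfl
      rw [hi] at h1
      have hs : (wheelGraph 1).s ((1 : Fin 2), false) = ((1 : Fin 2), false) := rfl
      rw [hs] at h2
      rw [← h1, h2]
end

section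
/- For l, m ≥ 1, there exists an étale morphism of Feynman graphs W^l → W^m if and only if m divides l; and when m divides l, the set of étale morphisms W^l → W^m has exactly 2m elements. -/
/-
An étale map of wheels commutes with swapping the two half-edges at a vertex, hence with the
rotation `rot = inv ∘ swap`, whose orbit through `(0, false)` meets every vertex. So an étale map
is determined by the image of `(0, false)`, and it carries a point of period `l + 1` to one of
period `l + 1`; since every half-edge of `W^{m+1}` has exact period `m + 1` under `rot`, this forces
`m + 1 ∣ l + 1`. Conversely, under that divisibility, unrolling the cycle from any of the
`2 (m + 1)` half-edges of the target gives an étale map.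
-/

open scoped Fin.NatCast Fin.CommRing

namespace wheelGraph

variable {n : ℕ}

def swap (x : Fin (n+1) × Bool) : Fin (n+1) × Bool := (x.1, !x.2)

lemma swap_swap (x : Fin (n+1) × Bool) : swap (swap x) = x := by simp [swap]

def rot (n : ℕ) (x : Fin (n+1) × Bool) : Fin (n+1) × Bool := (wheelGraph n).inv (swap x)

lemma rot_mk_false (i : Fin (n+1)) : rot n (i, false) = (i + 1, false) := by
  simp [rot, swap, wheelGraph]

lemma rot_mk_true (i : Fin (n+1)) : rot n (i, true) = (i - 1, true) := by
  simp [rot, swap, wheelGraph]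

lemma inv_rot (x : Fin (n+1) × Bool) : (wheelGraph n).inv (rot n x) = swap x := by
  obtain ⟨i, _ | _⟩ := x <;> simp [swap, rot_mk_false, rot_mk_true, wheelGraph]

lemma rot_iterate_mk_false (i : Fin (n+1)) (k : ℕ) : (rot n)^[k] (i, false) = (i + k, false) := by
  induction k with
  | zero => simp
  | succ k ih => rw [Function.iterate_succ_apply', ih, rot_mk_false]; push_cast; ring_nf

lemma rot_iterate_mk_true (i : Fin (n+1)) (k : ℕ) : (rot n)^[k] (i, true) = (i - k, true) := by
  induction k with
  | zero => simp
  | succ k ih => rw [Function.iterate_succ_apply', ih, rot_mk_true]; push_cast; ring_nf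

lemma isPeriodicPt_rot_iff (x : Fin (n+1) × Bool) (k : ℕ) :
    Function.IsPeriodicPt (rot n) k x ↔ n + 1 ∣ k := by
  obtain ⟨i, _ | _⟩ := x <;>
    simp [Function.IsPeriodicPt, Function.IsFixedPt, rot_iterate_mk_false, rot_iterate_mk_true]

lemma rot_iterate_val_zero (i : Fin (n+1)) : (rot n)^[i.val] (0, false) = (i, false) := by
  simp [rot_iterate_mk_false]

end wheelGraph

namespace FGHom

variable {l m : ℕ} (f : FGHom (wheelGraph l) (wheelGraph m))

open wheelGraph

lemma wheel_fst_fH (x : Fin (l+1) × Bool) : (f.fH x).1 = f.fV x.1 := (f.comm_t x).symm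

lemma wheel_fH_inv (x : Fin (l+1) × Bool) :
    f.fH ((wheelGraph l).inv x) = (wheelGraph m).inv (f.fH x) :=
  (f.comm_s _).symm.trans ((f.comm_inv x).trans (congrArg _ (f.comm_s x)))

lemma wheel_etale_iff : f.Etale ↔ ∀ x, f.fH (swap x) = swap (f.fH x) := by
  constructor
  · rintro ⟨hinj, -⟩ ⟨i, b⟩
    have hfst : (f.fH (i, !b)).1 = (f.fH (i, b)).1 :=
      (f.wheel_fst_fH (i, !b)).trans (f.wheel_fst_fH (i, b)).symm
    have hne : (f.fH (i, !b)).2 ≠ (f.fH (i, b)).2 := fun h => by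
      simpa using congrArg Prod.snd (hinj (i, !b) (i, b) rfl (Prod.ext hfst h))
    exact Prod.ext hfst (Bool.eq_not_iff.2 hne)
  · intro hswap
    refine ⟨?_, ?_⟩
    · rintro ⟨i, b⟩ ⟨j, c⟩ (rfl : i = j) h
      obtain rfl | rfl := Bool.eq_or_eq_not c b
      · rfl
      · simpa [swap] using congrArg Prod.snd (h.trans (hswap (i, b)))
    · rintro v ⟨j, c⟩ (rfl : j = f.fV v)
      obtain hc | hc := Bool.eq_or_eq_not (f.fH (v, false)).2 c
      · exact ⟨(v, false), rfl, Prod.ext (f.wheel_fst_fH _) hc⟩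
      · refine ⟨(v, true), rfl, (hswap (v, false)).trans ?_⟩
        exact Prod.ext (f.wheel_fst_fH _) (by simp [swap, hc])

end FGHom

namespace FGHom.Etale

open wheelGraph

variable {l m : ℕ} {f g : FGHom (wheelGraph l) (wheelGraph m)}

lemma semiconj_rot (hf : f.Etale) : Function.Semiconj f.fH (rot l) (rot m) := fun x =>
  (f.wheel_fH_inv (swap x)).trans (congrArg _ ((f.wheel_etale_iff.1 hf) x))

lemma fH_rot_iterate (hf : f.Etale) (k : ℕ) (x : Fin (l+1) × Bool) :
    f.fH ((rot l)^[k] x) = (rot m)^[k] (f.fH x) :=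
  hf.semiconj_rot.iterate_right k x

lemma dvd (hf : f.Etale) : m + 1 ∣ l + 1 :=
  (isPeriodicPt_rot_iff _ _).1 <|
    ((isPeriodicPt_rot_iff (0, false) (l + 1)).2 dvd_rfl).map hf.semiconj_rot

lemma ext (hf : f.Etale) (hg : g.Etale) (h : f.fH (0, false) = g.fH (0, false)) : f = g := by
  have hfalse (i : Fin (l+1)) : f.fH (i, false) = g.fH (i, false) := by
    rw [← rot_iterate_val_zero i, hf.fH_rot_iterate, hg.fH_rot_iterate, h]
  have hH : f.fH = g.fH := funext fun
    | (i, false) => hfalse i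
    | (i, true) => by
      rw [wheel_etale_iff] at hf hg
      exact (hf (i, false)).trans ((congrArg swap (hfalse i)).trans (hg (i, false)).symm)
  have hV : f.fV = g.fV := funext fun i => by
    rw [← f.wheel_fst_fH (i, false), ← g.wheel_fst_fH (i, false), hH]
  have hE : f.fE = g.fE := funext fun x =>
    (f.comm_s x).trans ((congrArg _ (congrFun hH x)).trans (g.comm_s x).symm)
  cases f; cases g
  simp_all

end FGHom.Etale

namespace wheelGraph

variable {l m : ℕ}

lemma rot_iterate_val_add_one (hdvd : m + 1 ∣ l + 1) (y : Fin (m+1) × Bool) (i : Fin (l+1)) :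
    (rot m)^[(i + 1).val] y = rot m ((rot m)^[i.val] y) := by
  rw [← Function.iterate_succ_apply' (rot m), Fin.val_add, Fin.val_one', Nat.add_mod_mod,
    ((isPeriodicPt_rot_iff y (l+1)).2 hdvd).iterate_mod_apply]

/-- Unrolls the cycle of `W^{l+1}` onto that of `W^{m+1}` starting at the half-edge `y`; it closes
up because `l + 1` is a period of `rot m`. -/
def unroll (hdvd : m + 1 ∣ l + 1) (y : Fin (m+1) × Bool) :
    FGHom (wheelGraph l) (wheelGraph m) where
  fE x := cond x.2 (swap ((rot m)^[x.1.val] y)) ((rot m)^[x.1.val] y)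
  fH x := cond x.2 (swap ((rot m)^[x.1.val] y)) ((rot m)^[x.1.val] y)
  fV i := ((rot m)^[i.val] y).1
  comm_inv
    | (i, true) => rot_iterate_val_add_one hdvd y i
    | (i, false) => by
      have h := rot_iterate_val_add_one hdvd y (i - 1)
      rw [sub_add_cancel] at h
      show swap ((rot m)^[(i - 1).val] y) = (wheelGraph m).inv ((rot m)^[i.val] y)
      rw [h]
      exact (inv_rot _).symm
  comm_s _ := rfl
  comm_t
    | (_, true) => rfl
    | (_, false) => rfl

lemma unroll_etale (hdvd : m + 1 ∣ l + 1) (y : Fin (m+1) × Bool) : (unroll hdvd y).Etale :=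
  (FGHom.wheel_etale_iff _).2 fun
    | (_, false) => rfl
    | (_, true) => (swap_swap _).symm

lemma bijective_etale_fH_zero (hdvd : m + 1 ∣ l + 1) :
    Function.Bijective
      fun f : {f : FGHom (wheelGraph l) (wheelGraph m) // f.Etale} => f.1.fH (0, false) :=
  ⟨fun f g h => Subtype.ext (f.2.ext g.2 h),
    fun y => ⟨⟨unroll hdvd y, unroll_etale hdvd y⟩, rfl⟩⟩

end wheelGraph

/-- For `l, m ≥ 1` there is an étale morphism `W^l → W^m` if and only if `m`
divides `l`, in which case there are exactly `2m` such; here `wheelGraph n`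
is the wheel graph `W^{n+1}`, so the statement is expressed with `l+1`, `m+1`. -/
theorem etale_wheel_to_wheel (l m : ℕ) :
    (Nonempty {f : FGHom (wheelGraph l) (wheelGraph m) // f.Etale} ↔
      (m + 1) ∣ (l + 1)) ∧
    ((m + 1) ∣ (l + 1) →
      Nat.card {f : FGHom (wheelGraph l) (wheelGraph m) // f.Etale} =
        2 * (m + 1)) := by
  refine ⟨⟨fun ⟨f⟩ => f.2.dvd, fun hdvd => ?_⟩, fun hdvd => ?_⟩
  · exact ⟨⟨wheelGraph.unroll hdvd (0, false), wheelGraph.unroll_etale hdvd _⟩⟩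
  · rw [Nat.card_eq_of_bijective _ (wheelGraph.bijective_etale_fH_zero hdvd)]
    simp [wheelGraph, mul_comm]
end

section
/- For k, n ≥ 0, every étale morphism of Feynman graphs L^k → L^n is pointwise injective (its edge, half-edge and vertex components are injective); moreover, the set of étale morphisms L^k → L^n has exactly 2(n − k + 1) elements if n ≥ k, and is empty if n < k. -/
/-! An étale morphism sends the two half-edges at a vertex bijectively onto the two half-edges at the
image vertex. Walking along `L^k` from one edge pair to the next crosses one vertex, so the image
walks along `L^n` one step at a time, always in the same direction. Hence an étale morphism is
determined by the image of `l_0`: it is a shift `l_i ↦ l_{i + 2a}` or a reflection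
`l_i ↦ l_{2(a + k) + 1 - i}` with `0 ≤ a ≤ n - k`, and these are injective. -/

theorem FGHom.ext_of_fE {G G' : FG} (ht : Function.Surjective G.t) {f g : FGHom G G'}
    (h : f.fE = g.fE) : f = g := by
  have hH : f.fH = g.fH := funext fun x => G'.s_inj (by rw [← f.comm_s, ← g.comm_s, h])
  have hV : f.fV = g.fV := funext fun v => by
    obtain ⟨x, rfl⟩ := ht v
    rw [f.comm_t, g.comm_t, hH]
  cases f; cases g; subst h hH hV; rfl

theorem FGHom.injective_fH {G G' : FG} {f : FGHom G G'} (hE : Function.Injective f.fE) :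
    Function.Injective f.fH :=
  fun x y hxy => G.s_inj (hE (by rw [f.comm_s, f.comm_s, hxy]))

namespace lineGraph

variable {k n : ℕ}

theorem t_surjective : Function.Surjective (lineGraph k).t := fun v => ⟨(v, true), rfl⟩

theorem hom_ext {G : FG} {f g : FGHom (lineGraph k) G}
    (h : ∀ j : Fin (k + 1), f.fE (j, false) = g.fE (j, false)) : f = g := by
  refine FGHom.ext_of_fE t_surjective (funext fun ⟨j, b⟩ => ?_)
  cases b
  · exact h j
  · exact (f.comm_inv (j, false)).trans ((congrArg G.inv (h j)).trans (g.comm_inv (j, false)).symm)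

def shiftHom (k n a : ℕ) (h : a + k ≤ n) : FGHom (lineGraph k) (lineGraph n) where
  fE (e : Fin (k + 1) × Bool) := (⟨a + e.1, by omega⟩, e.2)
  fH (x : Fin k × Bool) := (⟨a + x.1, by omega⟩, x.2)
  fV (i : Fin k) := ⟨a + i, by omega⟩
  comm_inv _ := rfl
  comm_s := by rintro ⟨i, _ | _⟩ <;> simp [lineGraph, Nat.add_assoc]
  comm_t _ := rfl

def reflectHom (k n a : ℕ) (h : a + k ≤ n) : FGHom (lineGraph k) (lineGraph n) where
  fE (e : Fin (k + 1) × Bool) := (⟨a + k - e.1, by omega⟩, !e.2)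
  fH (x : Fin k × Bool) := (⟨a + k - 1 - x.1, by omega⟩, !x.2)
  fV (i : Fin k) := ⟨a + k - 1 - i, by omega⟩
  comm_inv _ := rfl
  comm_s := by rintro ⟨i, _ | _⟩ <;> simp [lineGraph, Prod.ext_iff, Fin.ext_iff] <;> omega
  comm_t _ := rfl

variable {a : ℕ} {h : a + k ≤ n}

theorem shiftHom_injective :
    Function.Injective (shiftHom k n a h).fE ∧ Function.Injective (shiftHom k n a h).fH ∧
      Function.Injective (shiftHom k n a h).fV := by
  have hE : Function.Injective (shiftHom k n a h).fE := by
    intro e e' hee'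
    simp only [shiftHom, lineGraph, Prod.ext_iff, Fin.ext_iff, Nat.add_left_cancel_iff] at hee'
    exact Prod.ext (Fin.ext hee'.1) hee'.2
  refine ⟨hE, FGHom.injective_fH hE, fun v v' hvv' => Fin.ext ?_⟩
  simpa [shiftHom, lineGraph, Fin.ext_iff] using hvv'

theorem reflectHom_injective :
    Function.Injective (reflectHom k n a h).fE ∧ Function.Injective (reflectHom k n a h).fH ∧
      Function.Injective (reflectHom k n a h).fV := by
  have hE : Function.Injective (reflectHom k n a h).fE := by
    intro e e' hee'
    simp only [reflectHom, lineGraph, Prod.ext_iff, Fin.ext_iff, Bool.not_inj_iff] at hee'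
    exact Prod.ext (Fin.ext (by omega)) hee'.2
  refine ⟨hE, FGHom.injective_fH hE, fun v v' hvv' => Fin.ext ?_⟩
  simp only [reflectHom, lineGraph, Fin.ext_iff] at hvv'
  omega

theorem shiftHom_etale : (shiftHom k n a h).Etale :=
  ⟨fun _ _ _ hxy => shiftHom_injective.2.1 hxy, fun v x hx => ⟨(v, x.2), rfl, Prod.ext hx.symm rfl⟩⟩

theorem reflectHom_etale : (reflectHom k n a h).Etale :=
  ⟨fun _ _ _ hxy => reflectHom_injective.2.1 hxy,
    fun v x hx => ⟨(v, !x.2), rfl, Prod.ext hx.symm (Bool.not_not _)⟩⟩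

end lineGraph

namespace FGHom.Etale

open lineGraph

variable {k n : ℕ} {f : FGHom (lineGraph k) (lineGraph n)}

theorem exists_fH_vertex_eq (hf : f.Etale) (i : Fin k) :
    ∃ (w : Fin n) (c : Bool), f.fH (i, true) = (w, c) ∧ f.fH (i, false) = (w, !c) := by
  have hT : (f.fH (i, true)).1 = f.fV i := (f.comm_t (i, true)).symm
  have hF : (f.fH (i, false)).1 = f.fV i := (f.comm_t (i, false)).symm
  have hne : f.fH (i, false) ≠ f.fH (i, true) := fun heq =>
    Bool.false_ne_true (congrArg Prod.snd (hf.1 (i, false) (i, true) rfl heq))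
  refine ⟨f.fV i, (f.fH (i, true)).2, Prod.ext hT rfl, Prod.ext hF ?_⟩
  exact Bool.eq_not_of_ne fun h2 => hne (Prod.ext (hF.trans hT.symm) h2)

theorem exists_fE_castSucc_succ (hf : f.Etale) (i : Fin k) :
    ∃ w : Fin n,
      (f.fE (i.castSucc, false) = (w.castSucc, false) ∧ f.fE (i.succ, false) = (w.succ, false)) ∨
        (f.fE (i.castSucc, false) = (w.succ, true) ∧ f.fE (i.succ, false) = (w.castSucc, true)) := by
  obtain ⟨w, c, hT, hF⟩ := hf.exists_fH_vertex_eq i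
  have hprev : f.fE (i.castSucc, false) = (lineGraph n).inv ((lineGraph n).s (f.fH (i, true))) :=
    (f.comm_inv ((lineGraph k).s (i, true))).trans (congrArg _ (f.comm_s (i, true)))
  have hnext : f.fE (i.succ, false) = (lineGraph n).s (f.fH (i, false)) := f.comm_s (i, false)
  refine ⟨w, ?_⟩
  rw [hprev, hnext, hT, hF]
  cases c
  exacts [Or.inr ⟨rfl, rfl⟩, Or.inl ⟨rfl, rfl⟩]

theorem fE_ascending (hf : f.Etale) (h0 : (f.fE (0, false)).2 = false) (j : Fin (k + 1)) :
    (f.fE (j, false)).2 = false ∧ ((f.fE (j, false)).1 : ℕ) = (f.fE (0, false)).1 + j := by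
  induction j using Fin.induction with
  | zero => exact ⟨h0, rfl⟩
  | succ i ih =>
    obtain ⟨w, ⟨hc, hs⟩ | ⟨hc, hs⟩⟩ := hf.exists_fE_castSucc_succ i <;> rw [hc] at ih <;> rw [hs]
    · simp only [Fin.val_castSucc, Fin.val_succ, true_and] at ih ⊢; omega
    · simp at ih

theorem fE_descending (hf : f.Etale) (h0 : (f.fE (0, false)).2 = true) (j : Fin (k + 1)) :
    (f.fE (j, false)).2 = true ∧ ((f.fE (j, false)).1 : ℕ) + j = (f.fE (0, false)).1 := by
  induction j using Fin.induction with
  | zero => exact ⟨h0, rfl⟩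
  | succ i ih =>
    obtain ⟨w, ⟨hc, hs⟩ | ⟨hc, hs⟩⟩ := hf.exists_fE_castSucc_succ i <;> rw [hc] at ih <;> rw [hs]
    · simp at ih
    · simp only [Fin.val_castSucc, Fin.val_succ, true_and] at ih ⊢; omega

theorem eq_shiftHom_or_reflectHom (hf : f.Etale) :
    ∃ a, ∃ h : a + k ≤ n, f = shiftHom k n a h ∨ f = reflectHom k n a h := by
  have hlast := (f.fE (Fin.last k, false)).1.isLt
  cases h0 : (f.fE (0, false)).2
  · have hpos := hf.fE_ascending h0
    have hk := (hpos (Fin.last k)).2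
    rw [Fin.val_last] at hk
    refine ⟨(f.fE (0, false)).1, by omega, Or.inl (hom_ext fun j => ?_)⟩
    exact Prod.ext (Fin.ext (hpos j).2) (hpos j).1
  · have hpos := hf.fE_descending h0
    have hk := (hpos (Fin.last k)).2
    rw [Fin.val_last] at hk
    refine ⟨(f.fE (0, false)).1 - k, by omega, Or.inr (hom_ext fun j => ?_)⟩
    have hj := (hpos j).2
    exact Prod.ext (Fin.ext (by simp only [reflectHom]; omega)) (hpos j).1

end FGHom.Etale

namespace lineGraph

theorem card_etale {k n : ℕ} (hkn : k ≤ n) :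
    Nat.card {f : FGHom (lineGraph k) (lineGraph n) // f.Etale} = 2 * (n - k + 1) := by
  let φ : Fin (n - k + 1) ⊕ Fin (n - k + 1) → {f : FGHom (lineGraph k) (lineGraph n) // f.Etale} :=
    Sum.elim (fun a => ⟨shiftHom k n a (by omega), shiftHom_etale⟩)
      (fun a => ⟨reflectHom k n a (by omega), reflectHom_etale⟩)
  have hφ : Function.Bijective φ := by
    refine ⟨fun x y hxy => ?_, fun ⟨f, hf⟩ => ?_⟩
    · have := congrArg (fun f => f.1.fE (0, false)) hxy
      rcases x with a | a <;> rcases y with b | b <;>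
        simp [φ, shiftHom, reflectHom, lineGraph, Prod.ext_iff, Fin.ext_iff] at this ⊢ <;> omega
    · obtain ⟨a, h, rfl | rfl⟩ := hf.eq_shiftHom_or_reflectHom
      exacts [⟨.inl ⟨a, by omega⟩, rfl⟩, ⟨.inr ⟨a, by omega⟩, rfl⟩]
  rw [← Nat.card_eq_of_bijective φ hφ, Nat.card_sum, Nat.card_eq_fintype_card, Fintype.card_fin]
  ring

end lineGraph

/-- Every étale morphism `L^k → L^n` is pointwise injective; the set of étale
morphisms `L^k → L^n` has exactly `2(n - k + 1)` elements when `n ≥ k`, and is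
empty when `n < k`. -/
theorem etale_line_to_line (k n : ℕ) :
    (∀ f : FGHom (lineGraph k) (lineGraph n), f.Etale →
      Function.Injective f.fE ∧ Function.Injective f.fH ∧
        Function.Injective f.fV) ∧
    (k ≤ n →
      Nat.card {f : FGHom (lineGraph k) (lineGraph n) // f.Etale} =
        2 * (n - k + 1)) ∧
    (n < k → IsEmpty {f : FGHom (lineGraph k) (lineGraph n) // f.Etale}) := by
  refine ⟨fun f hf => ?_, lineGraph.card_etale, fun hnk => ⟨fun ⟨f, hf⟩ => ?_⟩⟩
  · obtain ⟨a, h, rfl | rfl⟩ := hf.eq_shiftHom_or_reflectHom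
    exacts [lineGraph.shiftHom_injective, lineGraph.reflectHom_injective]
  · obtain ⟨a, h, -⟩ := hf.eq_shiftHom_or_reflectHom
    omega
end
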